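/- arXiv:1707.07237 — 8 statements merged into one kernel-verified Lean document; each statement's English description precedes it below -/
import Mathlib

section
/- Let (E,d) be a compact metric space, μ a Borel probability measure on C(E,E) concentrated on Lipschitz maps, and α ∈ (0,1] with r := sup_{x≠y} ∫ (d(T(x),T(y))/d(x,y))^α μ(dT) < 1. Then for every φ ∈ H_α(E) one has m_α(Pφ) ≤ r · m_α(φ), and consequently ‖Pφ‖_α ≤ r ‖φ‖_α + sup|φ|. -/
/-!
Fix `x ≠ y` and write `P φ x - P φ y = ∫ (φ (T x) - φ (T y)) dμ(T)`. The Hölder bound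
`|φ (T x) - φ (T y)| ≤ m_α(φ) d(x,y)^α (d(Tx,Ty)/d(x,y))^α` integrates, by the hypothesis on `r`,
to `r m_α(φ) d(x,y)^α`. The sup-norm part is the trivial bound `sup |P φ| ≤ sup |φ|` for an
average, so `‖P φ‖_α ≤ sup |φ| + r m_α(φ) ≤ r ‖φ‖_α + sup |φ|`.
-/

open MeasureTheory Filter Set

/-- The Markov operator of an iterated function system:
`P φ x = ∫ φ (T x) dμ(T)`. -/
noncomputable def IFSP {E : Type*} [MetricSpace E] [MeasurableSpace C(E, E)]
    (μ : Measure C(E, E)) (φ : E → ℝ) : E → ℝ :=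
  fun x => ∫ T : C(E, E), φ (T x) ∂μ

/-- `sup |φ|`. -/
noncomputable def supAbs {E : Type*} (φ : E → ℝ) : ℝ := ⨆ x, |φ x|

/-- The α-Hölder seminorm `m_α(φ) = sup_{x≠y} |φ(x)-φ(y)|/d(x,y)^α`, expressed as the
least admissible Hölder constant. -/
noncomputable def holderSemi {E : Type*} [MetricSpace E] (α : ℝ) (φ : E → ℝ) : ℝ :=
  sInf {m : ℝ | 0 ≤ m ∧ ∀ x y : E, |φ x - φ y| ≤ m * dist x y ^ α}

/-- The α-Hölder norm `‖φ‖_α = sup|φ| + m_α(φ)`. -/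
noncomputable def holderNorm {E : Type*} [MetricSpace E] (α : ℝ) (φ : E → ℝ) : ℝ :=
  supAbs φ + holderSemi α φ

open Topology

section Holder

variable {E : Type*} [MetricSpace E] {α m : ℝ} {φ : E → ℝ}

lemma holderSemi_nonneg : 0 ≤ holderSemi α φ :=
  Real.sInf_nonneg fun _ h => h.1

lemma holderSemi_le (hm : 0 ≤ m) (hφ : ∀ x y, |φ x - φ y| ≤ m * dist x y ^ α) :
    holderSemi α φ ≤ m :=
  csInf_le ⟨0, fun _ h => h.1⟩ ⟨hm, hφ⟩

lemma abs_sub_le_holderSemi_mul (hα : 0 < α)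
    (hφ : ∃ M, ∀ x y, |φ x - φ y| ≤ M * dist x y ^ α) (x y : E) :
    |φ x - φ y| ≤ holderSemi α φ * dist x y ^ α := by
  obtain ⟨M, hM⟩ := hφ
  rcases eq_or_ne x y with rfl | hxy
  · simp [Real.zero_rpow hα.ne']
  have hdα : 0 < dist x y ^ α := Real.rpow_pos_of_pos (dist_pos.mpr hxy) α
  have hne : {m : ℝ | 0 ≤ m ∧ ∀ x y : E, |φ x - φ y| ≤ m * dist x y ^ α}.Nonempty :=
    ⟨max M 0, le_max_right _ _, fun x y =>
      (hM x y).trans (by gcongr; exact le_max_left _ _)⟩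
  rw [← div_le_iff₀ hdα]
  exact le_csInf hne fun a ha => (div_le_iff₀ hdα).mpr (ha.2 x y)

lemma continuous_of_abs_sub_le_mul_rpow (hα : 0 < α)
    (hφ : ∀ x y, |φ x - φ y| ≤ m * dist x y ^ α) : Continuous φ := by
  refine continuous_iff_continuousAt.mpr fun x => tendsto_iff_dist_tendsto_zero.mpr ?_
  have hbound : Tendsto (fun y => m * dist y x ^ α) (𝓝 x) (𝓝 0) := by
    have hcont : Continuous fun y => m * dist y x ^ α :=
      ((continuous_id.dist continuous_const).rpow_const fun _ => Or.inr hα.le).const_mul m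
    simpa [Real.zero_rpow hα.ne'] using hcont.tendsto x
  exact squeeze_zero (fun _ => dist_nonneg) (fun y => (hφ y x).trans_eq' (Real.dist_eq _ _))
    hbound

end Holder

section SupAbs

variable {E : Type*} {φ : E → ℝ}

lemma supAbs_nonneg : 0 ≤ supAbs φ :=
  Real.iSup_nonneg fun _ => abs_nonneg _

lemma abs_le_supAbs (hφ : BddAbove (range fun x => |φ x|)) (x : E) : |φ x| ≤ supAbs φ :=
  le_ciSup hφ x

lemma supAbs_le {a : ℝ} (ha : 0 ≤ a) (h : ∀ x, |φ x| ≤ a) : supAbs φ ≤ a :=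
  Real.iSup_le h ha

end SupAbs

section MarkovOperator

variable {E : Type*} [MetricSpace E] [MeasurableSpace C(E, E)] {μ : Measure C(E, E)}
  {φ : E → ℝ}

lemma integrable_comp_eval [CompactSpace E] [OpensMeasurableSpace C(E, E)] [IsFiniteMeasure μ]
    (hφ : Continuous φ) (x : E) : Integrable (fun T : C(E, E) => φ (T x)) μ :=
  .of_bound (hφ.comp (continuous_eval_const x)).aestronglyMeasurable _
    (Eventually.of_forall fun T => abs_le_supAbs (isCompact_range hφ.abs).bddAbove (T x))

lemma supAbs_IFSP_le [IsProbabilityMeasure μ] (hφ : BddAbove (range fun x => |φ x|)) :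
    supAbs (IFSP μ φ) ≤ supAbs φ :=
  supAbs_le supAbs_nonneg fun x => by
    simpa [IFSP] using norm_integral_le_of_norm_le_const (μ := μ)
      (f := fun T : C(E, E) => φ (T x)) (Eventually.of_forall fun T => abs_le_supAbs hφ (T x))

lemma abs_IFSP_sub_le {α r m : ℝ} (hα : 0 < α) (hr0 : 0 ≤ r)
    (hr : ∀ x y : E, x ≠ y →
      ∫⁻ T : C(E, E), ENNReal.ofReal ((dist (T x) (T y) / dist x y) ^ α) ∂μ ≤ ENNReal.ofReal r)
    (hm : 0 ≤ m) (hφ : ∀ x y, |φ x - φ y| ≤ m * dist x y ^ α)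
    (hint : ∀ x, Integrable (fun T : C(E, E) => φ (T x)) μ) (x y : E) :
    |IFSP μ φ x - IFSP μ φ y| ≤ r * m * dist x y ^ α := by
  rcases eq_or_ne x y with rfl | hxy
  · simp [Real.zero_rpow hα.ne']
  have hd : 0 < dist x y := dist_pos.mpr hxy
  set c := m * dist x y ^ α
  have hc : 0 ≤ c := by positivity
  have hpointwise : ∀ T : C(E, E),
      ENNReal.ofReal |φ (T x) - φ (T y)| ≤
        ENNReal.ofReal c * ENNReal.ofReal ((dist (T x) (T y) / dist x y) ^ α) := fun T => by
    rw [← ENNReal.ofReal_mul hc]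
    refine ENNReal.ofReal_le_ofReal ((hφ (T x) (T y)).trans_eq ?_)
    rw [Real.div_rpow dist_nonneg hd.le]
    field_simp
    ring
  have hlintegral : ∫⁻ T, ENNReal.ofReal |φ (T x) - φ (T y)| ∂μ ≤ ENNReal.ofReal (c * r) :=
    calc ∫⁻ T, ENNReal.ofReal |φ (T x) - φ (T y)| ∂μ
        ≤ ∫⁻ T, ENNReal.ofReal c * ENNReal.ofReal ((dist (T x) (T y) / dist x y) ^ α) ∂μ :=
          lintegral_mono hpointwise
      _ = ENNReal.ofReal c *
            ∫⁻ T, ENNReal.ofReal ((dist (T x) (T y) / dist x y) ^ α) ∂μ :=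
          lintegral_const_mul' _ _ ENNReal.ofReal_ne_top
      _ ≤ ENNReal.ofReal c * ENNReal.ofReal r := mul_le_mul_right (hr x y hxy) _
      _ = ENNReal.ofReal (c * r) := (ENNReal.ofReal_mul hc).symm
  calc |IFSP μ φ x - IFSP μ φ y| = |∫ T, (φ (T x) - φ (T y)) ∂μ| := by
        rw [IFSP, IFSP, integral_sub (hint x) (hint y)]
    _ ≤ (∫⁻ T, ENNReal.ofReal |φ (T x) - φ (T y)| ∂μ).toReal := by
        simpa [Real.norm_eq_abs] using
          norm_integral_le_lintegral_norm (μ := μ) fun T : C(E, E) => φ (T x) - φ (T y)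
    _ ≤ c * r := ENNReal.toReal_le_of_le_ofReal (by positivity) hlintegral
    _ = r * m * dist x y ^ α := by ring

end MarkovOperator

theorem stmt1_general {E : Type*} [MetricSpace E] [CompactSpace E]
    [MeasurableSpace C(E, E)] [BorelSpace C(E, E)]
    (μ : Measure C(E, E)) [IsProbabilityMeasure μ]
    (α : ℝ) (hα0 : 0 < α)
    (r : ℝ) (hr0 : 0 ≤ r)
    (hr : ∀ x y : E, x ≠ y →
      ∫⁻ T : C(E, E), ENNReal.ofReal ((dist (T x) (T y) / dist x y) ^ α) ∂μ
        ≤ ENNReal.ofReal r)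
    (φ : E → ℝ) (hφ : ∃ M : ℝ, ∀ x y : E, |φ x - φ y| ≤ M * dist x y ^ α) :
    (∀ x y : E, |IFSP μ φ x - IFSP μ φ y| ≤ r * holderSemi α φ * dist x y ^ α) ∧
      holderNorm α (IFSP μ φ) ≤ r * holderNorm α φ + supAbs φ := by
  have hholder := abs_sub_le_holderSemi_mul hα0 hφ
  have hcont : Continuous φ := continuous_of_abs_sub_le_mul_rpow hα0 hholder
  have hsemi := abs_IFSP_sub_le hα0 hr0 hr holderSemi_nonneg hholder (integrable_comp_eval hcont)
  refine ⟨hsemi, ?_⟩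
  calc holderNorm α (IFSP μ φ) ≤ supAbs φ + r * holderSemi α φ :=
        add_le_add (supAbs_IFSP_le (isCompact_range hcont.abs).bddAbove)
          (holderSemi_le (mul_nonneg hr0 holderSemi_nonneg) hsemi)
    _ ≤ r * holderNorm α φ + supAbs φ := by
        rw [holderNorm]
        nlinarith [mul_nonneg hr0 (supAbs_nonneg (φ := φ))]

/-- if `r := sup_{x≠y} ∫ (d(Tx,Ty)/d(x,y))^α dμ(T) < 1`, then for every
α-Hölder `φ` one has `m_α(Pφ) ≤ r m_α(φ)` and `‖Pφ‖_α ≤ r ‖φ‖_α + sup|φ|`. -/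
theorem stmt1 {E : Type*} [MetricSpace E] [CompactSpace E] [Nonempty E]
    [MeasurableSpace C(E, E)] [BorelSpace C(E, E)]
    (μ : Measure C(E, E)) [IsProbabilityMeasure μ]
    (hLip : μ {T : C(E, E) | ∃ K : NNReal, LipschitzWith K ⇑T} = 1)
    (α : ℝ) (hα0 : 0 < α) (hα1 : α ≤ 1)
    (r : ℝ) (hr0 : 0 ≤ r) (hr1 : r < 1)
    (hr : ∀ x y : E, x ≠ y →
      ∫⁻ T : C(E, E), ENNReal.ofReal ((dist (T x) (T y) / dist x y) ^ α) ∂μ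
        ≤ ENNReal.ofReal r)
    (φ : E → ℝ) (hφ : ∃ M : ℝ, ∀ x y : E, |φ x - φ y| ≤ M * dist x y ^ α) :
    (∀ x y : E, |IFSP μ φ x - IFSP μ φ y| ≤ r * holderSemi α φ * dist x y ^ α) ∧
      holderNorm α (IFSP μ φ) ≤ r * holderNorm α φ + supAbs φ :=
  stmt1_general μ α hα0 r hr0 hr φ hφ
end

section
/- Let α ∈ (0,1] and let p ∈ H_α[0,1] take values in [0,1], with q = 1−p, and assume p(0) = 1 and q(1) = 1. Let h ∈ H_α[0,1] be the unique function with Qh = h, h(0) = 0 and h(1) = 1, and let (Z_n)_{n≥0} be the canonical Markov chain with transition operator Q started at x ∈ [0,1], with law ℙ_x. Then (Z_n) converges ℙ_x-almost surely to a random variable Z_∞ taking values in {0,1}, and ℙ_x(Z_∞ = 1) = h(x), ℙ_x(Z_∞ = 0) = 1 − h(x). -/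
open MeasureTheory Filter Set

/-- The Diaconis–Friedman transition operator with weight function `p` (and `q = 1 − p`). -/
noncomputable def DFQ (p : ℝ → ℝ) (φ : ℝ → ℝ) : ℝ → ℝ :=
  fun x => p x * (∫ t in (0 : ℝ)..1, φ (t * x)) +
    (1 - p x) * ∫ t in (0 : ℝ)..1, φ (t * x + 1 - t)

/-- `φ` is α-Hölder on `[0,1]` with constant `M`. -/
def HolderOnI (α : ℝ) (M : ℝ) (φ : ℝ → ℝ) : Prop :=
  ∀ x ∈ Set.Icc (0 : ℝ) 1, ∀ y ∈ Set.Icc (0 : ℝ) 1, |φ x - φ y| ≤ M * |x - y| ^ α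

/-!
`h(Z_n)` is a bounded martingale, so it converges almost surely. To see that `Z_n` itself
converges to an endpoint, build a continuous `Ψ` with `QΨ ≤ Ψ` on `[0,1]` and `QΨ < Ψ` on `(0,1)`.
The expected decrements `E[Ψ(Z_n) - QΨ(Z_n)]` telescope, so they are summable and
`Ψ(Z_n) - QΨ(Z_n) → 0` almost surely; hence every cluster point of `Z_n` lies in `{0,1}`, and
since `h(Z_n)` converges while `h 0 ≠ h 1`, there is only one. So `Z_∞ = lim h(Z_n)`, and
dominated convergence gives `E Z_∞ = h x`.
-/

open Topology

theorem HolderOnI.continuousOn {α M : ℝ} {φ : ℝ → ℝ} (hα : 0 < α) (hφ : HolderOnI α M φ) :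
    ContinuousOn φ (Icc 0 1) := by
  intro x hx
  have hbound : Tendsto (fun y => M * |y - x| ^ α) (𝓝 x) (𝓝 0) := by
    have hcont : Continuous fun y => M * |y - x| ^ α :=
      continuous_const.mul ((continuous_abs.comp (continuous_sub_right x)).rpow_const
        fun _ => Or.inr hα.le)
    simpa [Real.zero_rpow hα.ne'] using hcont.tendsto x
  refine tendsto_iff_dist_tendsto_zero.2 (squeeze_zero' (Eventually.of_forall fun _ => dist_nonneg)
    ?_ (hbound.mono_left nhdsWithin_le_nhds))
  filter_upwards [self_mem_nhdsWithin] with y hy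
  exact hφ y hy x hx

namespace DiaconisFreedman

lemma exists_bounded_continuous_extension {f : ℝ → ℝ} (hf : ContinuousOn f (Icc 0 1)) :
    ∃ F : ℝ → ℝ, Continuous F ∧ (∃ C, ∀ y, |F y| ≤ C) ∧ EqOn F f (Icc 0 1) := by
  obtain ⟨C, hC⟩ := isCompact_Icc.exists_bound_of_continuousOn hf
  refine ⟨fun y => f (projIcc 0 1 zero_le_one y), ?_, ⟨C, fun y => hC _ (projIcc 0 1 _ y).2⟩,
    fun y hy => by simp [projIcc_of_mem _ hy]⟩
  exact hf.comp_continuous (continuous_subtype_val.comp continuous_projIcc)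
    fun y => (projIcc 0 1 zero_le_one y).2

lemma mul_add_one_sub_mem_Icc {t z : ℝ} (ht : t ∈ Icc (0 : ℝ) 1) (hz : z ∈ Icc (0 : ℝ) 1) :
    t * z + 1 - t ∈ Icc (0 : ℝ) 1 :=
  ⟨by nlinarith [mul_nonneg ht.1 hz.1, ht.2], by nlinarith [mul_le_mul_of_nonneg_left hz.2 ht.1]⟩

lemma exists_mul_eq {y z : ℝ} (hy : y ∈ Icc 0 z) : ∃ t ∈ Icc (0 : ℝ) 1, t * z = y := by
  rcases hy.1.eq_or_lt with rfl | hy0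
  · exact ⟨0, ⟨le_rfl, zero_le_one⟩, zero_mul z⟩
  · have hz : 0 < z := hy0.trans_le hy.2
    exact ⟨y / z, ⟨by positivity, (div_le_one hz).2 hy.2⟩, div_mul_cancel₀ y hz.ne'⟩

lemma exists_mul_add_one_sub_eq {y z : ℝ} (hy : y ∈ Icc z 1) :
    ∃ t ∈ Icc (0 : ℝ) 1, t * z + 1 - t = y := by
  obtain ⟨t, ht, hty⟩ :=
    exists_mul_eq (y := 1 - y) (z := 1 - z) ⟨by linarith [hy.2], by linarith [hy.1]⟩
  exact ⟨t, ht, by linarith⟩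

section Operator

variable {p f g : ℝ → ℝ} {z : ℝ}

lemma intervalIntegrable_comp_mul (hf : Continuous f) (z : ℝ) :
    IntervalIntegrable (fun t => f (t * z)) volume 0 1 :=
  (hf.comp (continuous_id.mul continuous_const)).intervalIntegrable 0 1

lemma intervalIntegrable_comp_mul_add_one_sub (hf : Continuous f) (z : ℝ) :
    IntervalIntegrable (fun t => f (t * z + 1 - t)) volume 0 1 :=
  (hf.comp (by fun_prop)).intervalIntegrable 0 1

lemma DFQ_congr (hz : z ∈ Icc (0 : ℝ) 1) (hfg : EqOn f g (Icc 0 1)) :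
    DFQ p f z = DFQ p g z := by
  have hI : ∀ t ∈ uIcc (0 : ℝ) 1, t ∈ Icc (0 : ℝ) 1 := fun t ht => by
    rwa [uIcc_of_le zero_le_one] at ht
  simp only [DFQ]
  rw [intervalIntegral.integral_congr fun t ht => hfg (unitInterval.mul_mem (hI t ht) hz),
    intervalIntegral.integral_congr fun t ht => hfg (mul_add_one_sub_mem_Icc (hI t ht) hz)]

lemma DFQ_const (p : ℝ → ℝ) (c z : ℝ) : DFQ p (fun _ => c) z = c := by
  simp only [DFQ, intervalIntegral.integral_const]
  ring

lemma DFQ_add (hf : Continuous f) (hg : Continuous g) (z : ℝ) :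
    DFQ p (fun y => f y + g y) z = DFQ p f z + DFQ p g z := by
  simp only [DFQ]
  rw [intervalIntegral.integral_add (intervalIntegrable_comp_mul hf z)
      (intervalIntegrable_comp_mul hg z),
    intervalIntegral.integral_add (intervalIntegrable_comp_mul_add_one_sub hf z)
      (intervalIntegrable_comp_mul_add_one_sub hg z)]
  ring

lemma DFQ_sub (hf : Continuous f) (hg : Continuous g) (z : ℝ) :
    DFQ p (fun y => f y - g y) z = DFQ p f z - DFQ p g z := by
  simp only [DFQ]
  rw [intervalIntegral.integral_sub (intervalIntegrable_comp_mul hf z)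
      (intervalIntegrable_comp_mul hg z),
    intervalIntegral.integral_sub (intervalIntegrable_comp_mul_add_one_sub hf z)
      (intervalIntegrable_comp_mul_add_one_sub hg z)]
  ring

lemma intervalIntegral_sq_sub_const {φ : ℝ → ℝ} (hφ : Continuous φ) (a : ℝ) :
    ∫ t in (0 : ℝ)..1, (φ t - a) ^ 2 =
      (∫ t in (0 : ℝ)..1, φ t ^ 2) - 2 * a * (∫ t in (0 : ℝ)..1, φ t) + a ^ 2 := by
  have hexp : (fun t => (φ t - a) ^ 2) = fun t => φ t ^ 2 - 2 * a * φ t + a ^ 2 := by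
    funext t; ring
  have hφ2 : IntervalIntegrable (fun t => φ t ^ 2) volume 0 1 := (hφ.pow 2).intervalIntegrable 0 1
  have hφa : IntervalIntegrable (fun t => 2 * a * φ t) volume 0 1 :=
    (continuous_const.mul hφ).intervalIntegrable 0 1
  rw [hexp, intervalIntegral.integral_add (hφ2.sub hφa) intervalIntegrable_const,
    intervalIntegral.integral_sub hφ2 hφa, intervalIntegral.integral_const_mul]
  simp

lemma DFQ_sq_sub_const (hf : Continuous f) (a z : ℝ) :
    DFQ p (fun y => (f y - a) ^ 2) z = DFQ p (fun y => f y ^ 2) z - 2 * a * DFQ p f z + a ^ 2 := by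
  simp only [DFQ]
  rw [intervalIntegral_sq_sub_const (φ := fun t => f (t * z)) (by fun_prop),
    intervalIntegral_sq_sub_const (φ := fun t => f (t * z + 1 - t)) (by fun_prop)]
  ring

lemma DFQ_mono (hf : Continuous f) (hg : Continuous g) (hz : z ∈ Icc (0 : ℝ) 1)
    (hp : p z ∈ Icc (0 : ℝ) 1) (hfg : ∀ y ∈ Icc (0 : ℝ) 1, f y ≤ g y) :
    DFQ p f z ≤ DFQ p g z := by
  have hA : ∫ t in (0 : ℝ)..1, f (t * z) ≤ ∫ t in (0 : ℝ)..1, g (t * z) :=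
    intervalIntegral.integral_mono_on zero_le_one (intervalIntegrable_comp_mul hf z)
      (intervalIntegrable_comp_mul hg z) fun t ht => hfg _ (unitInterval.mul_mem ht hz)
  have hB : ∫ t in (0 : ℝ)..1, f (t * z + 1 - t) ≤ ∫ t in (0 : ℝ)..1, g (t * z + 1 - t) :=
    intervalIntegral.integral_mono_on zero_le_one (intervalIntegrable_comp_mul_add_one_sub hf z)
      (intervalIntegrable_comp_mul_add_one_sub hg z)
      fun t ht => hfg _ (mul_add_one_sub_mem_Icc ht hz)
  simp only [DFQ]
  nlinarith [mul_le_mul_of_nonneg_left hA hp.1, mul_le_mul_of_nonneg_left hB (sub_nonneg.2 hp.2)]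

lemma lt_intervalIntegral_of_lt {φ : ℝ → ℝ} {c : ℝ} (hφ : Continuous φ)
    (hle : ∀ t ∈ Icc (0 : ℝ) 1, c ≤ φ t) (hlt : ∃ t ∈ Icc (0 : ℝ) 1, c < φ t) :
    c < ∫ t in (0 : ℝ)..1, φ t := by
  have := intervalIntegral.integral_lt_integral_of_continuousOn_of_le_of_exists_lt zero_lt_one
    continuousOn_const hφ.continuousOn (fun t ht => hle t (Ioc_subset_Icc_self ht)) hlt
  simpa using this

lemma lt_DFQ {c : ℝ} (hg : Continuous g) (hz : z ∈ Icc (0 : ℝ) 1) (hp : p z ∈ Icc (0 : ℝ) 1)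
    (hle : ∀ y ∈ Icc (0 : ℝ) 1, c ≤ g y)
    (hlt : (p z ≠ 0 ∧ ∃ y ∈ Icc 0 z, c < g y) ∨ (p z ≠ 1 ∧ ∃ y ∈ Icc z 1, c < g y)) :
    c < DFQ p g z := by
  set A := ∫ t in (0 : ℝ)..1, g (t * z)
  set B := ∫ t in (0 : ℝ)..1, g (t * z + 1 - t)
  have hgA : Continuous fun t => g (t * z) := hg.comp (continuous_id.mul continuous_const)
  have hgB : Continuous fun t => g (t * z + 1 - t) := hg.comp (by fun_prop)
  have hleA : ∀ t ∈ Icc (0 : ℝ) 1, c ≤ g (t * z) := fun t ht => hle _ (unitInterval.mul_mem ht hz)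
  have hleB : ∀ t ∈ Icc (0 : ℝ) 1, c ≤ g (t * z + 1 - t) :=
    fun t ht => hle _ (mul_add_one_sub_mem_Icc ht hz)
  have hcA : c ≤ A := by
    simpa using intervalIntegral.integral_mono_on (μ := volume) zero_le_one intervalIntegrable_const
      (hgA.intervalIntegrable 0 1) hleA
  have hcB : c ≤ B := by
    simpa using intervalIntegral.integral_mono_on (μ := volume) zero_le_one intervalIntegrable_const
      (hgB.intervalIntegrable 0 1) hleB
  show c < p z * A + (1 - p z) * B
  rcases hlt with ⟨hp0, y, hy, hcy⟩ | ⟨hp1, y, hy, hcy⟩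
  · obtain ⟨t, ht, rfl⟩ := exists_mul_eq hy
    have hA : c < A := lt_intervalIntegral_of_lt hgA hleA ⟨t, ht, hcy⟩
    have hp0' : 0 < p z := hp.1.lt_of_ne' hp0
    nlinarith [mul_le_mul_of_nonneg_left hcB (sub_nonneg.2 hp.2)]
  · obtain ⟨t, ht, rfl⟩ := exists_mul_add_one_sub_eq hy
    have hB : c < B := lt_intervalIntegral_of_lt hgB hleB ⟨t, ht, hcy⟩
    have hp1' : 0 < 1 - p z := sub_pos.2 (hp.2.lt_of_ne hp1)
    nlinarith [mul_le_mul_of_nonneg_left hcA hp.1]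

lemma lt_DFQ_of_lt_on_both_branches {c : ℝ} (hg : Continuous g) (hz : z ∈ Icc (0 : ℝ) 1)
    (hp : p z ∈ Icc (0 : ℝ) 1) (hle : ∀ y ∈ Icc (0 : ℝ) 1, c ≤ g y)
    (hleft : ∃ y ∈ Icc 0 z, c < g y) (hright : ∃ y ∈ Icc z 1, c < g y) :
    c < DFQ p g z := by
  refine lt_DFQ hg hz hp hle ?_
  by_cases hp0 : p z = 0
  · exact Or.inr ⟨by simp [hp0], hright⟩
  · exact Or.inl ⟨hp0, hleft⟩

lemma DFQ_nonneg (hg : Continuous g) (hz : z ∈ Icc (0 : ℝ) 1) (hp : p z ∈ Icc (0 : ℝ) 1)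
    (hle : ∀ y ∈ Icc (0 : ℝ) 1, 0 ≤ g y) : 0 ≤ DFQ p g z :=
  DFQ_const p 0 z ▸ DFQ_mono continuous_const hg hz hp hle

lemma DFQ_sq_sub_pos (hg : Continuous g) (hz : z ∈ Icc (0 : ℝ) 1) (hp : p z ∈ Icc (0 : ℝ) 1)
    (hleft : ∃ y ∈ Icc 0 z, g y ≠ g z) (hright : ∃ y ∈ Icc z 1, g y ≠ g z) :
    0 < DFQ p (fun y => (g y - g z) ^ 2) z := by
  have hsq : ∀ y, g y ≠ g z → 0 < (g y - g z) ^ 2 := fun y hy => by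
    have : g y - g z ≠ 0 := sub_ne_zero.2 hy
    positivity
  obtain ⟨y, hy, hne⟩ := hleft
  obtain ⟨y', hy', hne'⟩ := hright
  exact lt_DFQ_of_lt_on_both_branches (by fun_prop) hz hp (fun _ _ => sq_nonneg _)
    ⟨y, hy, hsq y hne⟩ ⟨y', hy', hsq y' hne'⟩

lemma DFQ_of_eq_one (hpz : p z = 1) : DFQ p f z = ∫ t in (0 : ℝ)..1, f (t * z) := by
  simp [DFQ, hpz]

lemma DFQ_comp_one_sub (f : ℝ → ℝ) (z : ℝ) :
    DFQ p (fun y => f (1 - y)) z = DFQ (fun y => 1 - p (1 - y)) f (1 - z) := by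
  simp only [DFQ, sub_sub_cancel]
  have h1 : ∀ t : ℝ, 1 - t * z = t * (1 - z) + 1 - t := fun t => by ring
  have h2 : ∀ t : ℝ, 1 - (t * z + 1 - t) = t * (1 - z) := fun t => by ring
  simp only [h1, h2]
  ring

lemma continuousAt_DFQ (hf : Continuous f) (hp : ContinuousAt p z) :
    ContinuousAt (DFQ p f) z := by
  have hA : Continuous fun x => ∫ t in (0 : ℝ)..1, f (t * x) :=
    intervalIntegral.continuous_parametric_intervalIntegral_of_continuous' (by fun_prop) 0 1
  have hB : Continuous fun x => ∫ t in (0 : ℝ)..1, f (t * x + 1 - t) :=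
    intervalIntegral.continuous_parametric_intervalIntegral_of_continuous' (by fun_prop) 0 1
  exact (hp.mul hA.continuousAt).add ((continuousAt_const.sub hp).mul hB.continuousAt)

end Operator

def IsDFQHarmonic (p h : ℝ → ℝ) : Prop :=
  ∀ z ∈ Icc (0 : ℝ) 1, DFQ p h z = h z

section Harmonic

variable {p h : ℝ → ℝ}

theorem IsDFQHarmonic.nonneg (hh : IsDFQHarmonic p h) (hc : Continuous h)
    (hp : ∀ z ∈ Icc (0 : ℝ) 1, p z ∈ Icc (0 : ℝ) 1) (h0 : 0 ≤ h 0) (h1 : 0 ≤ h 1) :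
    ∀ z ∈ Icc (0 : ℝ) 1, 0 ≤ h z := by
  obtain ⟨zm, hzm, hmin⟩ :=
    isCompact_Icc.exists_isMinOn (nonempty_Icc.2 zero_le_one) hc.continuousOn
  intro z hz
  by_contra! hneg
  have hm : h zm < 0 := (hmin hz).trans_lt hneg
  have := lt_DFQ_of_lt_on_both_branches (c := h zm) hc hzm (hp zm hzm) (fun y hy => hmin hy)
    ⟨0, ⟨le_rfl, hzm.1⟩, by linarith⟩ ⟨1, ⟨hzm.2, le_rfl⟩, by linarith⟩
  exact (hh zm hzm).not_gt this

theorem IsDFQHarmonic.comp_one_sub (hh : IsDFQHarmonic p h) (hc : Continuous h) :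
    IsDFQHarmonic (fun y => 1 - p (1 - y)) (fun y => 1 - h (1 - y)) := by
  intro z hz
  rw [DFQ_comp_one_sub (fun u => 1 - h u)]
  simp only [sub_sub_cancel]
  rw [DFQ_sub (f := fun _ => 1) continuous_const hc, DFQ_const,
    hh (1 - z) (Icc.mem_iff_one_sub_mem.1 hz)]

/-- `[0, c]` is the maximal segment on which `h` vanishes. There `p = 1`, since otherwise the right
branch of `Q`, which reaches `h 1 = 1`, would give `Q h > 0`. -/
theorem IsDFQHarmonic.exists_flat_segment (hh : IsDFQHarmonic p h) (hc : Continuous h)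
    (hp : ∀ z ∈ Icc (0 : ℝ) 1, p z ∈ Icc (0 : ℝ) 1) (h0 : h 0 = 0) (h1 : h 1 = 1) :
    ∃ c, (∀ z ∈ Icc 0 c, p z = 1) ∧ ∀ z ∈ Ioc c 1, ∃ y ∈ Icc 0 z, h y ≠ h z := by
  set T := {y | y ∈ Icc (0 : ℝ) 1 ∧ h y ≠ 0}
  have hT : (1 : ℝ) ∈ T := ⟨right_mem_Icc.2 zero_le_one, by simp [h1]⟩
  have hTbdd : BddBelow T := ⟨0, fun y hy => hy.1.1⟩
  have hc0 : 0 ≤ sInf T := le_csInf ⟨1, hT⟩ fun y hy => hy.1.1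
  have hc1 : sInf T ≤ 1 := csInf_le hTbdd hT
  have hzero : ∀ y ∈ Icc 0 (sInf T), h y = 0 := by
    have hlt : ∀ y ∈ Ico 0 (sInf T), h y = 0 := fun y hy => by
      by_contra hne
      exact (csInf_le hTbdd ⟨⟨hy.1, hy.2.le.trans hc1⟩, hne⟩).not_gt hy.2
    intro y hy
    rcases hy.2.lt_or_eq with hy' | rfl
    · exact hlt y ⟨hy.1, hy'⟩
    rcases hy.1.eq_or_lt with hT0 | hT0
    · rw [← hT0, h0]
    · refine (isClosed_eq hc continuous_const).closure_subset_iff.2 hlt ?_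
      rw [closure_Ico hT0.ne]
      exact ⟨hy.1, le_rfl⟩
  have hnonneg := hh.nonneg hc hp h0.ge (by rw [h1]; exact zero_le_one)
  refine ⟨sInf T, fun z hz => ?_, fun z hz => ?_⟩
  · have hzI : z ∈ Icc (0 : ℝ) 1 := ⟨hz.1, hz.2.trans hc1⟩
    by_contra hpz
    have := lt_DFQ (c := 0) hc hzI (hp z hzI) hnonneg
      (Or.inr ⟨hpz, 1, ⟨hzI.2, le_rfl⟩, by rw [h1]; exact one_pos⟩)
    rw [hh z hzI, hzero z hz] at this
    exact lt_irrefl _ this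
  · by_cases hz0 : h z = 0
    · obtain ⟨y, hyT, hyz⟩ := exists_lt_of_csInf_lt ⟨1, hT⟩ hz.1
      exact ⟨y, ⟨hyT.1.1, hyz.le⟩, hz0 ▸ hyT.2⟩
    · exact ⟨0, ⟨le_rfl, hc0.trans hz.1.le⟩, by rw [h0]; exact Ne.symm hz0⟩

end Harmonic

section Lyapunov

variable {p h : ℝ → ℝ} {c z : ℝ}

lemma min_sub_DFQ_min_of_mem (hz : z ∈ Icc 0 c) (hpz : p z = 1) :
    min z c - DFQ p (fun y => min y c) z = z / 2 := by
  have hmin : ∫ t in (0 : ℝ)..1, min (t * z) c = ∫ t in (0 : ℝ)..1, t * z := by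
    refine intervalIntegral.integral_congr fun t ht => min_eq_left ?_
    rw [uIcc_of_le zero_le_one] at ht
    nlinarith [ht.2, hz.1, hz.2]
  rw [DFQ_of_eq_one hpz, min_eq_left hz.2, hmin, intervalIntegral.integral_mul_const, integral_id]
  ring

lemma min_sub_DFQ_min_nonneg (hp : ∀ z ∈ Icc (0 : ℝ) 1, p z ∈ Icc (0 : ℝ) 1)
    (hp1 : ∀ z ∈ Icc 0 c, p z = 1) (hz : z ∈ Icc (0 : ℝ) 1) :
    0 ≤ min z c - DFQ p (fun y => min y c) z := by
  rcases le_or_gt z c with hzc | hcz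
  · rw [min_sub_DFQ_min_of_mem ⟨hz.1, hzc⟩ (hp1 z ⟨hz.1, hzc⟩)]
    linarith [hz.1]
  · have := DFQ_mono (g := fun _ => c) (by fun_prop) continuous_const hz (hp z hz)
      fun y _ => min_le_right y c
    rw [DFQ_const] at this
    rw [min_eq_right hcz.le]
    linarith

/-- The defect of `-h²` is `Q((h - h z)²)(z)`, the conditional variance of the martingale
`h(Z_n)`; it can only vanish on the maximal segments `[0, c]` and `[1 - c', 1]` where `h` is flat.
There the chain jumps towards the nearby end, so `min y c` resp. `min (1 - y) c'` loses `z / 2`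
resp. `(1 - z) / 2` on average. -/
theorem exists_lyapunov (hpc : ContinuousOn p (Icc 0 1))
    (hp : ∀ z ∈ Icc (0 : ℝ) 1, p z ∈ Icc (0 : ℝ) 1) (hh : IsDFQHarmonic p h) (hc : Continuous h)
    (h0 : h 0 = 0) (h1 : h 1 = 1) :
    ∃ Ψ : ℝ → ℝ, Continuous Ψ ∧ (∀ z ∈ Icc (0 : ℝ) 1, 0 ≤ Ψ z - DFQ p Ψ z) ∧
      ∀ z ∈ Ioo (0 : ℝ) 1, 0 < Ψ z - DFQ p Ψ z ∧ ContinuousAt (fun y => Ψ y - DFQ p Ψ y) z := by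
  set p' : ℝ → ℝ := fun y => 1 - p (1 - y)
  have hp' : ∀ z ∈ Icc (0 : ℝ) 1, p' z ∈ Icc (0 : ℝ) 1 := fun z hz =>
    Icc.mem_iff_one_sub_mem.1 (hp _ (Icc.mem_iff_one_sub_mem.1 hz))
  obtain ⟨c, hp1, hleft⟩ := hh.exists_flat_segment hc hp h0 h1
  obtain ⟨c', hp1', hright⟩ :=
    (hh.comp_one_sub hc).exists_flat_segment (by fun_prop) hp' (by simp [h1]) (by simp [h0])
  set Ψ : ℝ → ℝ := fun y => min y c + min (1 - y) c' - h y ^ 2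
  have hdefect : ∀ z ∈ Icc (0 : ℝ) 1, Ψ z - DFQ p Ψ z =
      (min z c - DFQ p (fun y => min y c) z) +
        (min (1 - z) c' - DFQ p' (fun y => min y c') (1 - z)) +
        DFQ p (fun y => (h y - h z) ^ 2) z := by
    intro z hz
    rw [DFQ_sub (f := fun y => min y c + min (1 - y) c') (by fun_prop) (by fun_prop),
      DFQ_add (f := fun y => min y c) (g := fun y => min (1 - y) c') (by fun_prop) (by fun_prop),
      DFQ_comp_one_sub (fun y => min y c'), DFQ_sq_sub_const hc, hh z hz]
    ring
  have hL : ∀ z ∈ Icc (0 : ℝ) 1, 0 ≤ min z c - DFQ p (fun y => min y c) z := fun z hz =>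
    min_sub_DFQ_min_nonneg hp hp1 hz
  have hR : ∀ z ∈ Icc (0 : ℝ) 1, 0 ≤ min (1 - z) c' - DFQ p' (fun y => min y c') (1 - z) :=
    fun z hz => min_sub_DFQ_min_nonneg hp' hp1' (Icc.mem_iff_one_sub_mem.1 hz)
  have hV : ∀ z ∈ Icc (0 : ℝ) 1, 0 ≤ DFQ p (fun y => (h y - h z) ^ 2) z := fun z hz =>
    DFQ_nonneg (by fun_prop) hz (hp z hz) fun _ _ => sq_nonneg _
  refine ⟨Ψ, by fun_prop, fun z hz => ?_, fun z hz => ⟨?_, ?_⟩⟩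
  · linarith [hdefect z hz, hL z hz, hR z hz, hV z hz]
  · have hzI := Ioo_subset_Icc_self hz
    have h1z := Icc.mem_iff_one_sub_mem.1 hzI
    rcases le_or_gt z c with hzc | hcz
    · linarith [hz.1, hdefect z hzI, hR z hzI, hV z hzI,
        min_sub_DFQ_min_of_mem ⟨hzI.1, hzc⟩ (hp1 z ⟨hzI.1, hzc⟩)]
    rcases le_or_gt (1 - z) c' with hzc' | hcz'
    · linarith [hz.2, hdefect z hzI, hL z hzI, hV z hzI,
        min_sub_DFQ_min_of_mem (p := p') ⟨h1z.1, hzc'⟩ (hp1' (1 - z) ⟨h1z.1, hzc'⟩)]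
    have hV' : 0 < DFQ p (fun y => (h y - h z) ^ 2) z := by
      refine DFQ_sq_sub_pos hc hzI (hp z hzI) (hleft z ⟨hcz, hzI.2⟩) ?_
      obtain ⟨y, hy, hne⟩ := hright (1 - z) ⟨hcz', h1z.2⟩
      exact ⟨1 - y, ⟨by linarith [hy.2], by linarith [hy.1]⟩, fun heq => hne (by simp [heq])⟩
    linarith [hdefect z hzI, hL z hzI, hR z hzI]
  · have hΨ : Continuous Ψ := by fun_prop
    exact hΨ.continuousAt.sub (continuousAt_DFQ hΨ (hpc.continuousAt (Icc_mem_nhds hz.1 hz.2)))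

end Lyapunov

theorem tendsto_zero_or_one_of_tendsto_defect {w g : ℝ → ℝ} {z : ℕ → ℝ} {L : ℝ}
    (hz : ∀ n, z n ∈ Icc (0 : ℝ) 1) (hw : Tendsto (fun n => w (z n)) atTop (𝓝 0))
    (hwpos : ∀ y ∈ Ioo (0 : ℝ) 1, 0 < w y) (hwc : ∀ y ∈ Ioo (0 : ℝ) 1, ContinuousAt w y)
    (hg : Tendsto (fun n => g (z n)) atTop (𝓝 L)) (hgc : Continuous g) (hg0 : g 0 = 0)
    (hg1 : g 1 = 1) :
    (L = 0 ∨ L = 1) ∧ Tendsto z atTop (𝓝 L) := by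
  have hlim : ∀ {u : ℕ → ℝ} {a b : ℝ}, MapClusterPt a atTop u → Tendsto u atTop (𝓝 b) → a = b :=
    fun hcl hu => eq_of_nhds_neBot (hcl.clusterPt.mono hu)
  have hcluster : ∀ y ∈ Icc (0 : ℝ) 1, MapClusterPt y atTop z → y = L ∧ (y = 0 ∨ y = 1) := by
    intro y hy hcl
    have hgy : g y = L := hlim (hcl.continuousAt_comp hgc.continuousAt) hg
    have hy01 : y = 0 ∨ y = 1 := by
      by_contra! hne
      have hyI : y ∈ Ioo (0 : ℝ) 1 := ⟨hy.1.lt_of_ne hne.1.symm, hy.2.lt_of_ne hne.2⟩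
      exact (hwpos y hyI).ne' (hlim (hcl.continuousAt_comp (hwc y hyI)) hw)
    refine ⟨?_, hy01⟩
    rcases hy01 with rfl | rfl
    · rw [← hgy, hg0]
    · rw [← hgy, hg1]
  obtain ⟨y, hy, hcl⟩ :=
    isCompact_Icc.exists_mapClusterPt_of_frequently (l := atTop) (Frequently.of_forall hz)
  obtain ⟨rfl, hy01⟩ := hcluster y hy hcl
  exact ⟨hy01, isCompact_Icc.tendsto_nhds_of_unique_mapClusterPt (Eventually.of_forall hz)
    fun y' hy' hcl' => (hcluster y' hy' hcl').1⟩

section Probability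

variable {Ω : Type*} [MeasurableSpace Ω] {μ : Measure Ω}

theorem ae_tendsto_zero_of_summable_integral {Y : ℕ → Ω → ℝ} (hY : ∀ n, Integrable (Y n) μ)
    (hnn : ∀ n ω, 0 ≤ Y n ω) (hs : Summable fun n => ∫ ω, Y n ω ∂μ) :
    ∀ᵐ ω ∂μ, Tendsto (fun n => Y n ω) atTop (𝓝 0) := by
  have hnorm : ∀ n, eLpNorm (Y n) 1 μ = ENNReal.ofReal (∫ ω, Y n ω ∂μ) := fun n => by
    rw [eLpNorm_one_eq_lintegral_enorm,
      ofReal_integral_eq_lintegral_ofReal (hY n) (Eventually.of_forall (hnn n))]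
    simp_rw [Real.enorm_of_nonneg (hnn n _)]
  have hsum : ∀ᵐ ω ∂μ, Summable fun n => ‖Y n ω‖ := by
    refine summable_norm_of_tsum_eLpNorm_ne_top le_rfl (fun n => (hY n).aestronglyMeasurable) ?_
    simp_rw [hnorm]
    rw [← ENNReal.ofReal_tsum_of_nonneg (fun n => integral_nonneg (hnn n)) hs]
    exact ENNReal.ofReal_ne_top
  filter_upwards [hsum] with ω hω
  exact tendsto_zero_iff_norm_tendsto_zero.2 hω.tendsto_atTop_zero

theorem measure_eq_ofReal_integral_of_ae_zero_or_one [IsProbabilityMeasure μ] {X : Ω → ℝ}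
    (hX : Measurable X) (h01 : ∀ᵐ ω ∂μ, X ω = 0 ∨ X ω = 1) :
    μ {ω | X ω = 1} = ENNReal.ofReal (∫ ω, X ω ∂μ) ∧
      μ {ω | X ω = 0} = ENNReal.ofReal (1 - ∫ ω, X ω ∂μ) := by
  have hS : MeasurableSet {ω | X ω = 1} := hX (measurableSet_singleton 1)
  have hind : X =ᵐ[μ] {ω | X ω = 1}.indicator 1 := by
    filter_upwards [h01] with ω hω
    rcases hω with h | h <;> simp [h]
  have hcompl : {ω | X ω = 0} =ᵐ[μ] ({ω | X ω = 1}ᶜ : Set Ω) := by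
    filter_upwards [h01] with ω hω
    change (X ω = 0) = (X ω ≠ 1)
    rcases hω with h | h <;> simp [h]
  rw [integral_congr_ae hind, integral_indicator_one hS, measure_congr hcompl,
    prob_compl_eq_one_sub hS, ENNReal.ofReal_sub _ measureReal_nonneg, ENNReal.ofReal_one,
    ofReal_measureReal]
  exact ⟨rfl, rfl⟩

variable {p : ℝ → ℝ} {Z : ℕ → Ω → ℝ} {hZ : ∀ n, StronglyMeasurable (Z n)}

def IsDFQChain (p : ℝ → ℝ) (μ : Measure Ω) (Z : ℕ → Ω → ℝ)
    (hZ : ∀ n, StronglyMeasurable (Z n)) : Prop :=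
  ∀ n : ℕ, ∀ f : ℝ → ℝ, Measurable f → (∃ C : ℝ, ∀ y : ℝ, |f y| ≤ C) →
    μ[fun ω => f (Z (n + 1) ω)|Filtration.natural Z hZ n] =ᵐ[μ] fun ω => DFQ p f (Z n ω)

lemma integrable_comp_of_mem_Icc [IsFiniteMeasure μ] (hZ : ∀ n, StronglyMeasurable (Z n))
    (hZI : ∀ n ω, Z n ω ∈ Icc (0 : ℝ) 1) {f : ℝ → ℝ} (hf : Continuous f) (n : ℕ) :
    Integrable (fun ω => f (Z n ω)) μ := by
  obtain ⟨C, hC⟩ := isCompact_Icc.exists_bound_of_continuousOn hf.continuousOn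
  exact Integrable.of_bound (hf.comp_stronglyMeasurable (hZ n)).aestronglyMeasurable C
    (Eventually.of_forall fun ω => hC _ (hZI n ω))

theorem IsDFQChain.condExp_comp (hM : IsDFQChain p μ Z hZ) (hZI : ∀ n ω, Z n ω ∈ Icc (0 : ℝ) 1)
    {f : ℝ → ℝ} (hf : Continuous f) (n : ℕ) :
    μ[fun ω => f (Z (n + 1) ω)|Filtration.natural Z hZ n] =ᵐ[μ] fun ω => DFQ p f (Z n ω) := by
  obtain ⟨F, hFc, hFC, hFf⟩ := exists_bounded_continuous_extension hf.continuousOn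
  have hF := hM n F hFc.measurable hFC
  have e1 : (fun ω => F (Z (n + 1) ω)) = fun ω => f (Z (n + 1) ω) :=
    funext fun ω => hFf (hZI _ ω)
  have e2 : (fun ω => DFQ p F (Z n ω)) = fun ω => DFQ p f (Z n ω) :=
    funext fun ω => DFQ_congr (hZI n ω) hFf
  rwa [e1, e2] at hF

theorem IsDFQChain.integral_comp_succ [IsFiniteMeasure μ] (hM : IsDFQChain p μ Z hZ)
    (hZI : ∀ n ω, Z n ω ∈ Icc (0 : ℝ) 1) {f : ℝ → ℝ} (hf : Continuous f) (n : ℕ) :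
    ∫ ω, f (Z (n + 1) ω) ∂μ = ∫ ω, DFQ p f (Z n ω) ∂μ := by
  rw [← integral_condExp (μ := μ) (f := fun ω => f (Z (n + 1) ω)) ((Filtration.natural Z hZ).le n)]
  exact integral_congr_ae (hM.condExp_comp hZI hf n)

theorem IsDFQChain.integrable_DFQ_comp [IsFiniteMeasure μ] (hM : IsDFQChain p μ Z hZ)
    (hZI : ∀ n ω, Z n ω ∈ Icc (0 : ℝ) 1) {f : ℝ → ℝ} (hf : Continuous f) (n : ℕ) :
    Integrable (fun ω => DFQ p f (Z n ω)) μ :=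
  integrable_condExp.congr (hM.condExp_comp hZI hf n)

theorem IsDFQChain.ae_tendsto_defect [IsProbabilityMeasure μ] (hM : IsDFQChain p μ Z hZ)
    (hZI : ∀ n ω, Z n ω ∈ Icc (0 : ℝ) 1) {Ψ : ℝ → ℝ} (hΨ : Continuous Ψ)
    (hnn : ∀ z ∈ Icc (0 : ℝ) 1, 0 ≤ Ψ z - DFQ p Ψ z) :
    ∀ᵐ ω ∂μ, Tendsto (fun n => Ψ (Z n ω) - DFQ p Ψ (Z n ω)) atTop (𝓝 0) := by
  obtain ⟨C, hC⟩ := isCompact_Icc.exists_bound_of_continuousOn hΨ.continuousOn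
  have hint := integrable_comp_of_mem_Icc (μ := μ) hZ hZI hΨ
  have hstep : ∀ n, ∫ ω, Ψ (Z n ω) - DFQ p Ψ (Z n ω) ∂μ =
      ∫ ω, Ψ (Z n ω) ∂μ - ∫ ω, Ψ (Z (n + 1) ω) ∂μ := fun n => by
    rw [integral_sub (hint n) (hM.integrable_DFQ_comp hZI hΨ n), hM.integral_comp_succ hZI hΨ n]
  have hbound : ∀ n, |∫ ω, Ψ (Z n ω) ∂μ| ≤ C := fun n => by
    simpa using norm_integral_le_of_norm_le_const (μ := μ)
      (Eventually.of_forall fun ω => hC _ (hZI n ω))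
  refine ae_tendsto_zero_of_summable_integral (fun n => (hint n).sub
    (hM.integrable_DFQ_comp hZI hΨ n)) (fun n ω => hnn _ (hZI n ω)) ?_
  refine summable_of_sum_range_le (c := 2 * C)
    (fun n => integral_nonneg fun ω => hnn _ (hZI n ω)) fun N => ?_
  rw [Finset.sum_congr rfl fun n _ => hstep n, Finset.sum_range_sub']
  linarith [abs_le.1 (hbound 0), abs_le.1 (hbound N)]

theorem IsDFQChain.exists_ae_tendsto_of_harmonic [IsProbabilityMeasure μ]
    (hM : IsDFQChain p μ Z hZ) (hZI : ∀ n ω, Z n ω ∈ Icc (0 : ℝ) 1) {g : ℝ → ℝ}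
    (hg : Continuous g) (hgh : IsDFQHarmonic p g) {x : ℝ} (hZ0 : ∀ᵐ ω ∂μ, Z 0 ω = x) :
    ∃ G : Ω → ℝ, Measurable G ∧ (∀ᵐ ω ∂μ, Tendsto (fun n => g (Z n ω)) atTop (𝓝 (G ω))) ∧
      ∫ ω, G ω ∂μ = g x := by
  obtain ⟨C, hC⟩ := isCompact_Icc.exists_bound_of_continuousOn hg.continuousOn
  set M : ℕ → Ω → ℝ := fun n ω => g (Z n ω)
  have hMC : ∀ n ω, ‖M n ω‖ ≤ C := fun n ω => hC _ (hZI n ω)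
  have hharm : ∀ n, (fun ω => DFQ p g (Z n ω)) = M n := fun n =>
    funext fun ω => hgh _ (hZI n ω)
  have hmart : Martingale M (Filtration.natural Z hZ) μ :=
    martingale_nat (fun n => hg.comp_stronglyMeasurable (Filtration.stronglyAdapted_natural hZ n))
      (integrable_comp_of_mem_Icc hZ hZI hg)
      fun n => (hharm n ▸ hM.condExp_comp hZI hg n).symm
  have hlim := hmart.submartingale.ae_tendsto_limitProcess (R := C.toNNReal) fun n =>
    (eLpNorm_le_of_ae_bound (Eventually.of_forall (hMC n))).trans (by simp)
  have hconst : ∀ n, ∫ ω, M n ω ∂μ = g x := by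
    intro n
    induction n with
    | zero => simp [M, integral_congr_ae (hZ0.mono fun ω hω => congrArg g hω)]
    | succ n ih => rw [← ih, hM.integral_comp_succ hZI hg n, hharm n]
  refine ⟨_, Filtration.stronglyMeasurable_limit_process'.measurable, hlim,
    tendsto_nhds_unique ?_ ((tendsto_const_nhds (f := atTop)).congr fun n => (hconst n).symm)⟩
  exact tendsto_integral_of_dominated_convergence (fun _ => C)
    (fun n => (integrable_comp_of_mem_Icc hZ hZI hg n).aestronglyMeasurable) (integrable_const C)
    (fun n => Eventually.of_forall (hMC n)) hlim

end Probability

end DiaconisFreedman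

open DiaconisFreedman

theorem stmt10_general (α : ℝ) (hα0 : 0 < α)
    (p : ℝ → ℝ) (hpH : ∃ M : ℝ, HolderOnI α M p)
    (hp01 : ∀ x ∈ Set.Icc (0 : ℝ) 1, p x ∈ Set.Icc (0 : ℝ) 1)
    -- the harmonic function `h`
    (h : ℝ → ℝ) (hhH : ∃ M : ℝ, HolderOnI α M h)
    (hQh : ∀ x ∈ Set.Icc (0 : ℝ) 1, DFQ p h x = h x)
    (hh0 : h 0 = 0) (hh1 : h 1 = 1)
    -- the canonical Markov chain with kernel `Q` started at `x`
    {Ω : Type*} [MeasurableSpace Ω] (x : ℝ) (hx : x ∈ Set.Icc (0 : ℝ) 1)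
    (ℙx : Measure Ω) [IsProbabilityMeasure ℙx]
    (Z : ℕ → Ω → ℝ) (hZmeas : ∀ n, StronglyMeasurable (Z n))
    (hZrange : ∀ n ω, Z n ω ∈ Set.Icc (0 : ℝ) 1)
    (hZ0 : ∀ᵐ ω ∂ℙx, Z 0 ω = x)
    (hMarkov : ∀ n : ℕ, ∀ f : ℝ → ℝ, Measurable f → (∃ C : ℝ, ∀ y : ℝ, |f y| ≤ C) →
      ℙx[fun ω => f (Z (n + 1) ω)|(MeasureTheory.Filtration.natural Z hZmeas) n]
        =ᵐ[ℙx] fun ω => DFQ p f (Z n ω)) :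
    ∃ Zinf : Ω → ℝ,
      (∀ᵐ ω ∂ℙx, Tendsto (fun n => Z n ω) atTop (nhds (Zinf ω))) ∧
      (∀ᵐ ω ∂ℙx, Zinf ω = 0 ∨ Zinf ω = 1) ∧
      ℙx {ω | Zinf ω = 1} = ENNReal.ofReal (h x) ∧
      ℙx {ω | Zinf ω = 0} = ENNReal.ofReal (1 - h x) := by
  obtain ⟨Mp, hpH⟩ := hpH
  obtain ⟨Mh, hhH⟩ := hhH
  have hM : IsDFQChain p ℙx Z hZmeas := hMarkov
  obtain ⟨H, hHc, -, hHh⟩ := exists_bounded_continuous_extension (hhH.continuousOn hα0)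
  have hHharm : IsDFQHarmonic p H := fun z hz => by rw [DFQ_congr hz hHh, hQh z hz, hHh hz]
  have hH0 : H 0 = 0 := (hHh (left_mem_Icc.2 zero_le_one)).trans hh0
  have hH1 : H 1 = 1 := (hHh (right_mem_Icc.2 zero_le_one)).trans hh1
  obtain ⟨Ψ, hΨc, hΨnn, hΨpos⟩ := exists_lyapunov (hpH.continuousOn hα0) hp01 hHharm hHc hH0 hH1
  obtain ⟨Zinf, hZinf, hlim, hint⟩ := hM.exists_ae_tendsto_of_harmonic hZrange hHc hHharm hZ0
  have hconv : ∀ᵐ ω ∂ℙx, (Zinf ω = 0 ∨ Zinf ω = 1) ∧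
      Tendsto (fun n => Z n ω) atTop (𝓝 (Zinf ω)) := by
    filter_upwards [hM.ae_tendsto_defect hZrange hΨc hΨnn, hlim] with ω hΨω hHω
    exact tendsto_zero_or_one_of_tendsto_defect (hZrange · ω) hΨω (fun y hy => (hΨpos y hy).1)
      (fun y hy => (hΨpos y hy).2) hHω hHc hH0 hH1
  obtain ⟨hlaw1, hlaw0⟩ :=
    measure_eq_ofReal_integral_of_ae_zero_or_one hZinf (hconv.mono fun _ hω => hω.1)
  rw [hint, hHh hx] at hlaw1 hlaw0
  exact ⟨Zinf, hconv.mono fun _ hω => hω.2, hconv.mono fun _ hω => hω.1, hlaw1, hlaw0⟩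

/-- if `p ∈ H_α[0,1]` with values in `[0,1]`, `p(0) = 1` and `q(1) = 1`, and
`h` is the (unique) `Q`-harmonic α-Hölder function with `h(0) = 0`, `h(1) = 1`, then the
canonical chain `(Z_n)` started at `x` converges `ℙ_x`-a.s. to a random variable `Z_∞`
with values in `{0,1}`, with `ℙ_x(Z_∞ = 1) = h(x)` and `ℙ_x(Z_∞ = 0) = 1 − h(x)`. -/
theorem stmt10 (α : ℝ) (hα0 : 0 < α) (hα1 : α ≤ 1)
    (p : ℝ → ℝ) (hpH : ∃ M : ℝ, HolderOnI α M p)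
    (hp01 : ∀ x ∈ Set.Icc (0 : ℝ) 1, p x ∈ Set.Icc (0 : ℝ) 1)
    (hp0 : p 0 = 1) (hq1 : 1 - p 1 = 1)
    -- the harmonic function `h`
    (h : ℝ → ℝ) (hhH : ∃ M : ℝ, HolderOnI α M h)
    (hQh : ∀ x ∈ Set.Icc (0 : ℝ) 1, DFQ p h x = h x)
    (hh0 : h 0 = 0) (hh1 : h 1 = 1)
    -- the canonical Markov chain with kernel `Q` started at `x`
    {Ω : Type*} [MeasurableSpace Ω] (x : ℝ) (hx : x ∈ Set.Icc (0 : ℝ) 1)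
    (ℙx : Measure Ω) [IsProbabilityMeasure ℙx]
    (Z : ℕ → Ω → ℝ) (hZmeas : ∀ n, StronglyMeasurable (Z n))
    (hZrange : ∀ n ω, Z n ω ∈ Set.Icc (0 : ℝ) 1)
    (hZ0 : ∀ᵐ ω ∂ℙx, Z 0 ω = x)
    (hMarkov : ∀ n : ℕ, ∀ f : ℝ → ℝ, Measurable f → (∃ C : ℝ, ∀ y : ℝ, |f y| ≤ C) →
      ℙx[fun ω => f (Z (n + 1) ω)|(MeasureTheory.Filtration.natural Z hZmeas) n]
        =ᵐ[ℙx] fun ω => DFQ p f (Z n ω)) :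
    ∃ Zinf : Ω → ℝ,
      (∀ᵐ ω ∂ℙx, Tendsto (fun n => Z n ω) atTop (nhds (Zinf ω))) ∧
      (∀ᵐ ω ∂ℙx, Zinf ω = 0 ∨ Zinf ω = 1) ∧
      ℙx {ω | Zinf ω = 1} = ENNReal.ofReal (h x) ∧
      ℙx {ω | Zinf ω = 0} = ENNReal.ofReal (1 - h x) :=
  stmt10_general α hα0 p hpH hp01 h hhH hQh hh0 hh1 x hx ℙx Z hZmeas hZrange hZ0 hMarkov
end

section
/- Let p:[0,1]→[0,1] be Borel measurable and q = 1−p. For all bounded nonnegative Borel functions φ, ψ:[0,1]→[0,∞), one has ∫₀¹ φ(x) · Qψ(x) dx = ∫₀¹ Q*φ(x) · ψ(x) dx, where Q*φ(x) := ∫₀^x (q(t)/(1−t)) φ(t) dt + ∫_x^1 (p(t)/t) φ(t) dt (the integrals taking values in [0,∞]). -/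
open MeasureTheory Filter Set

/-- The formal adjoint `Q*` of the Diaconis–Friedman operator, for nonnegative functions,
with values in `[0,∞]`:
`Q*φ(x) = ∫₀^x (q(t)/(1−t)) φ(t) dt + ∫_x^1 (p(t)/t) φ(t) dt`. -/
noncomputable def DFQstar (p : ℝ → ℝ) (φ : ℝ → ℝ) (x : ℝ) : ENNReal :=
  (∫⁻ t in Set.Ioo (0 : ℝ) x, ENNReal.ofReal ((1 - p t) / (1 - t) * φ t)) +
    ∫⁻ t in Set.Ioo x 1, ENNReal.ofReal (p t / t * φ t)

/-! Substituting `u = t x` and `u = t x + 1 - t` turns `φ(x) Qψ(x)` into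
`(p(x)/x) φ(x) ∫₀ˣ ψ + (q(x)/(1-x)) φ(x) ∫ₓ¹ ψ` for `0 < x < 1`. Integrating in `x` gives two
double integrals over the triangles `u < x` and `x < u` of `[0,1]²`; exchanging the order of
integration (Tonelli, everything being nonnegative) produces `∫₀¹ Q*φ(u) ψ(u) du`. -/

theorem lintegral_Ioo_lintegral_Ioo_swap (μ : Measure ℝ) [SFinite μ] {f : ℝ → ℝ → ENNReal}
    (hf : Measurable (Function.uncurry f)) (a b : ℝ) :
    ∫⁻ x in Ioo a b, ∫⁻ u in Ioo a x, f x u ∂μ ∂μ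
      = ∫⁻ u in Ioo a b, ∫⁻ x in Ioo u b, f x u ∂μ ∂μ := by
  set g : ℝ → ℝ → ENNReal := fun x u =>
    {z : ℝ × ℝ | z.2 < z.1}.indicator (Function.uncurry f) (x, u)
  have hg : Measurable (Function.uncurry g) :=
    hf.indicator (measurableSet_lt measurable_snd measurable_fst)
  have inner_left : EqOn (fun x => ∫⁻ u in Ioo a x, f x u ∂μ)
      (fun x => ∫⁻ u in Ioo a b, g x u ∂μ) (Ioo a b) := by
    intro x hx
    have : ∀ u, g x u = (Iio x).indicator (f x) u := fun u => by
      simp only [g, indicator_apply, mem_ofPred_eq, mem_Iio, Function.uncurry_apply_pair]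
    simp_rw [this]
    rw [lintegral_indicator measurableSet_Iio, Measure.restrict_restrict measurableSet_Iio,
      Iio_inter_Ioo, min_eq_left hx.2.le]
  have inner_right : EqOn (fun u => ∫⁻ x in Ioo u b, f x u ∂μ)
      (fun u => ∫⁻ x in Ioo a b, g x u ∂μ) (Ioo a b) := by
    intro u hu
    have : ∀ x, g x u = (Ioi u).indicator (f · u) x := fun x => by
      simp only [g, indicator_apply, mem_ofPred_eq, mem_Ioi, Function.uncurry_apply_pair]
    simp_rw [this]
    rw [lintegral_indicator measurableSet_Ioi, Measure.restrict_restrict measurableSet_Ioi,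
      Ioi_inter_Ioo, max_eq_left hu.1.le]
  calc ∫⁻ x in Ioo a b, ∫⁻ u in Ioo a x, f x u ∂μ ∂μ
      = ∫⁻ x in Ioo a b, ∫⁻ u in Ioo a b, g x u ∂μ ∂μ :=
        setLIntegral_congr_fun measurableSet_Ioo inner_left
    _ = ∫⁻ u in Ioo a b, ∫⁻ x in Ioo a b, g x u ∂μ ∂μ := lintegral_lintegral_swap hg.aemeasurable
    _ = ∫⁻ u in Ioo a b, ∫⁻ x in Ioo u b, f x u ∂μ ∂μ :=
        (setLIntegral_congr_fun measurableSet_Ioo inner_right).symm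

theorem lintegral_mul_setLIntegral_Ioo_swap (μ : Measure ℝ) [SFinite μ] {F G : ℝ → ENNReal}
    (hF : Measurable F) (hG : Measurable G) (a b : ℝ) :
    ∫⁻ x in Ioo a b, F x * ∫⁻ u in Ioo a x, G u ∂μ ∂μ
      = ∫⁻ u in Ioo a b, G u * ∫⁻ x in Ioo u b, F x ∂μ ∂μ := by
  have := lintegral_Ioo_lintegral_Ioo_swap μ (f := fun x u => F x * G u)
    ((hF.comp measurable_fst).mul (hG.comp measurable_snd)) a b
  simp_rw [lintegral_const_mul _ hG, lintegral_mul_const _ hF] at this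
  simpa only [mul_comm] using this

theorem DFQ_eq_of_ne (p ψ : ℝ → ℝ) {x : ℝ} (hx0 : x ≠ 0) (hx1 : x ≠ 1) :
    DFQ p ψ x = p x / x * (∫ u in (0 : ℝ)..x, ψ u) + (1 - p x) / (1 - x) * ∫ u in x..1, ψ u := by
  have scale : ∫ t in (0 : ℝ)..1, ψ (t * x) = x⁻¹ * ∫ u in (0 : ℝ)..x, ψ u := by
    simpa using intervalIntegral.integral_comp_mul_right ψ hx0 (a := 0) (b := 1)
  have reflect : ∫ t in (0 : ℝ)..1, ψ (t * x + 1 - t) = (1 - x)⁻¹ * ∫ u in x..1, ψ u := by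
    have hx1' : x - 1 ≠ 0 := sub_ne_zero.mpr hx1
    have affine : ∀ t : ℝ, t * x + 1 - t = (x - 1) * t + 1 := fun t => by ring
    simp only [affine, intervalIntegral.integral_comp_mul_add ψ hx1', mul_zero, zero_add, mul_one,
      sub_add_cancel, smul_eq_mul]
    rw [intervalIntegral.integral_symm 1 x, ← neg_sub 1 x, inv_neg, neg_mul, mul_neg]
  simp only [DFQ, scale, reflect]
  ring

theorem ofReal_intervalIntegral_eq_setLIntegral_Ioo {f : ℝ → ℝ} {a b : ℝ} (hab : a ≤ b)
    (hf : IntegrableOn f (Ioc a b)) (hf0 : ∀ x ∈ Ioc a b, 0 ≤ f x) :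
    ENNReal.ofReal (∫ x in a..b, f x) = ∫⁻ x in Ioo a b, ENNReal.ofReal (f x) := by
  rw [intervalIntegral.integral_of_le hab,
    ofReal_integral_eq_lintegral_ofReal hf (ae_restrict_of_forall_mem measurableSet_Ioc hf0)]
  exact (setLIntegral_congr Ioo_ae_eq_Ioc).symm

theorem ofReal_mul_DFQ_eq {p φ ψ : ℝ → ℝ} {x : ℝ} (hx : x ∈ Ioo 0 1) (hpx : p x ∈ Icc 0 1)
    (hφx : 0 ≤ φ x) (hψ : IntegrableOn ψ (Ioc 0 1)) (hψ0 : ∀ u ∈ Icc 0 1, 0 ≤ ψ u) :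
    ENNReal.ofReal (φ x * DFQ p ψ x)
      = ENNReal.ofReal (p x / x * φ x) * (∫⁻ u in Ioo 0 x, ENNReal.ofReal (ψ u))
        + ENNReal.ofReal ((1 - p x) / (1 - x) * φ x) * ∫⁻ u in Ioo x 1, ENNReal.ofReal (ψ u) := by
  obtain ⟨hx0, hx1⟩ := hx
  have hψ0x : ∀ u ∈ Icc 0 x, 0 ≤ ψ u := fun u hu => hψ0 u ⟨hu.1, hu.2.trans hx1.le⟩
  have hψx1 : ∀ u ∈ Icc x 1, 0 ≤ ψ u := fun u hu => hψ0 u ⟨hx0.le.trans hu.1, hu.2⟩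
  have hA : 0 ≤ p x / x * φ x := by have := hpx.1; positivity
  have hB : 0 ≤ (1 - p x) / (1 - x) * φ x :=
    mul_nonneg (div_nonneg (sub_nonneg.mpr hpx.2) (sub_nonneg.mpr hx1.le)) hφx
  rw [← ofReal_intervalIntegral_eq_setLIntegral_Ioo hx0.le
      (hψ.mono_set (Ioc_subset_Ioc_right hx1.le)) fun u hu => hψ0x u (Ioc_subset_Icc_self hu),
    ← ofReal_intervalIntegral_eq_setLIntegral_Ioo hx1.le
      (hψ.mono_set (Ioc_subset_Ioc_left hx0.le)) fun u hu => hψx1 u (Ioc_subset_Icc_self hu),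
    ← ENNReal.ofReal_mul hA, ← ENNReal.ofReal_mul hB, ← ENNReal.ofReal_add
      (mul_nonneg hA (intervalIntegral.integral_nonneg hx0.le hψ0x))
      (mul_nonneg hB (intervalIntegral.integral_nonneg hx1.le hψx1)),
    DFQ_eq_of_ne p ψ hx0.ne' hx1.ne]
  congr 1
  ring

theorem stmt11_general (p : ℝ → ℝ) (hpmeas : Measurable p)
    (hp01 : ∀ x ∈ Set.Icc (0 : ℝ) 1, p x ∈ Set.Icc (0 : ℝ) 1)
    (φ ψ : ℝ → ℝ) (hφmeas : Measurable φ) (hψmeas : Measurable ψ)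
    (hφ0 : ∀ x ∈ Set.Icc (0 : ℝ) 1, 0 ≤ φ x) (hψ0 : ∀ x ∈ Set.Icc (0 : ℝ) 1, 0 ≤ ψ x)
    (hψbd : ∃ C : ℝ, ∀ x : ℝ, |ψ x| ≤ C) :
    ∫⁻ x in Set.Icc (0 : ℝ) 1, ENNReal.ofReal (φ x * DFQ p ψ x)
      = ∫⁻ x in Set.Icc (0 : ℝ) 1, DFQstar p φ x * ENNReal.ofReal (ψ x) := by
  obtain ⟨C, hC⟩ := hψbd
  have hψ : IntegrableOn ψ (Ioc 0 1) :=
    IntegrableOn.of_bound measure_Ioc_lt_top hψmeas.aestronglyMeasurable C (ae_of_all _ hC)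
  set A := fun x => ENNReal.ofReal (p x / x * φ x)
  set B := fun x => ENNReal.ofReal ((1 - p x) / (1 - x) * φ x)
  set Ψ := fun u => ENNReal.ofReal (ψ u)
  have hA : Measurable A := by fun_prop
  have hB : Measurable B := by fun_prop
  have hΨ : Measurable Ψ := by fun_prop
  calc ∫⁻ x in Icc 0 1, ENNReal.ofReal (φ x * DFQ p ψ x)
      = ∫⁻ x in Ioo 0 1, A x * (∫⁻ u in Ioo 0 x, Ψ u) + B x * ∫⁻ u in Ioo x 1, Ψ u := by
        rw [← setLIntegral_congr Ioo_ae_eq_Icc]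
        exact setLIntegral_congr_fun measurableSet_Ioo fun x hx => ofReal_mul_DFQ_eq hx
          (hp01 x (Ioo_subset_Icc_self hx)) (hφ0 x (Ioo_subset_Icc_self hx)) hψ hψ0
    _ = (∫⁻ x in Ioo 0 1, A x * ∫⁻ u in Ioo 0 x, Ψ u)
          + ∫⁻ x in Ioo 0 1, B x * ∫⁻ u in Ioo x 1, Ψ u :=
        lintegral_add_left (hA.mul (Monotone.measurable fun _ _ h => lintegral_mono_set
          (Ioo_subset_Ioo_right h))) _
    _ = (∫⁻ u in Ioo 0 1, Ψ u * ∫⁻ x in Ioo u 1, A x)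
          + ∫⁻ u in Ioo 0 1, Ψ u * ∫⁻ x in Ioo 0 u, B x := by
        rw [lintegral_mul_setLIntegral_Ioo_swap volume hA hΨ,
          ← lintegral_mul_setLIntegral_Ioo_swap volume hΨ hB]
    _ = ∫⁻ u in Ioo 0 1, DFQstar p φ u * Ψ u := by
        have hΨA : Measurable fun u => Ψ u * ∫⁻ x in Ioo u 1, A x :=
          hΨ.mul (Antitone.measurable fun _ _ h => lintegral_mono_set (Ioo_subset_Ioo_left h))
        rw [← lintegral_add_left hΨA]
        simp only [DFQstar, A, B, add_mul, mul_comm (Ψ _), add_comm]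
    _ = ∫⁻ u in Icc 0 1, DFQstar p φ u * Ψ u := setLIntegral_congr Ioo_ae_eq_Icc

/-- for Borel `p : [0,1] → [0,1]` and bounded nonnegative Borel `φ, ψ`,
`∫₀¹ φ(x)·Qψ(x) dx = ∫₀¹ Q*φ(x)·ψ(x) dx`. -/
theorem stmt11 (p : ℝ → ℝ) (hpmeas : Measurable p)
    (hp01 : ∀ x ∈ Set.Icc (0 : ℝ) 1, p x ∈ Set.Icc (0 : ℝ) 1)
    (φ ψ : ℝ → ℝ) (hφmeas : Measurable φ) (hψmeas : Measurable ψ)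
    (hφ0 : ∀ x ∈ Set.Icc (0 : ℝ) 1, 0 ≤ φ x) (hψ0 : ∀ x ∈ Set.Icc (0 : ℝ) 1, 0 ≤ ψ x)
    (hφbd : ∃ C : ℝ, ∀ x : ℝ, |φ x| ≤ C) (hψbd : ∃ C : ℝ, ∀ x : ℝ, |ψ x| ≤ C) :
    ∫⁻ x in Set.Icc (0 : ℝ) 1, ENNReal.ofReal (φ x * DFQ p ψ x)
      = ∫⁻ x in Set.Icc (0 : ℝ) 1, DFQstar p φ x * ENNReal.ofReal (ψ x) :=
  stmt11_general p hpmeas hp01 φ ψ hφmeas hψmeas hφ0 hψ0 hψbd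
end

section
/- Let p:[0,1]→[0,1] be continuous and q = 1−p. Let φ:(0,1)→ℝ be continuous, with ∫₀^x q(t)/(1−t) |φ(t)| dt < ∞ and ∫_x^1 p(t)/t |φ(t)| dt < ∞ for every x ∈ (0,1), and suppose φ(x) = ∫₀^x (q(t)/(1−t)) φ(t) dt + ∫_x^1 (p(t)/t) φ(t) dt for all x ∈ (0,1). Then φ is differentiable on (0,1) and φ'(x) = (q(x)/(1−x) − p(x)/x) φ(x) for all x ∈ (0,1); consequently φ(x) = φ(1/2) · exp(∫_x^{1/2} p(t)/t dt + ∫_{1/2}^x q(t)/(1−t) dt) on (0,1). -/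
open MeasureTheory Filter Set

/-!
On `(0,1)` the integral equation writes `φ` as `F + G` with `F y = ∫_{(0,y)} f` and
`G y = ∫_{(y,1)} g` for the continuous integrands `f = q φ / (1-t)`, `g = p φ / t`, so the
fundamental theorem of calculus gives `φ' = f - g = (q/(1-x) - p/x) φ`. For this linear equation
`φ · exp(-∫_{1/2}^x (q/(1-t) - p/t) dt)` has zero derivative on the interval, hence is constant.
-/

section SetIntegralDeriv

variable {E : Type*} [NormedAddCommGroup E] [NormedSpace ℝ E] [CompleteSpace E]
  {f : ℝ → E} {a b x : ℝ}

theorem hasDerivAt_setIntegral_Ioo_right (hf : ContinuousOn f (Ioo a b)) (hx : x ∈ Ioo a b)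
    (hfi : IntegrableOn f (Ioo a x)) :
    HasDerivAt (fun y => ∫ t in Ioo a y, f t) (f x) x := by
  have hF : HasDerivAt (fun y => ∫ t in a..y, f t) (f x) x :=
    intervalIntegral.integral_hasDerivAt_right
      ((intervalIntegrable_iff_integrableOn_Ioo_of_le hx.1.le).2 hfi)
      (hf.stronglyMeasurableAtFilter isOpen_Ioo x hx) (hf.continuousAt (Ioo_mem_nhds hx.1 hx.2))
  refine hF.congr_of_eventuallyEq ?_
  filter_upwards [Ioi_mem_nhds hx.1] with y hy
  rw [intervalIntegral.integral_of_le (le_of_lt hy), integral_Ioc_eq_integral_Ioo]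

theorem hasDerivAt_setIntegral_Ioo_left (hf : ContinuousOn f (Ioo a b)) (hx : x ∈ Ioo a b)
    (hfi : IntegrableOn f (Ioo x b)) :
    HasDerivAt (fun y => ∫ t in Ioo y b, f t) (-f x) x := by
  have hF : HasDerivAt (fun y => ∫ t in y..b, f t) (-f x) x :=
    intervalIntegral.integral_hasDerivAt_left
      ((intervalIntegrable_iff_integrableOn_Ioo_of_le hx.2.le).2 hfi)
      (hf.stronglyMeasurableAtFilter isOpen_Ioo x hx) (hf.continuousAt (Ioo_mem_nhds hx.1 hx.2))
  refine hF.congr_of_eventuallyEq ?_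
  filter_upwards [Iio_mem_nhds hx.2] with y hy
  rw [intervalIntegral.integral_of_le (le_of_lt hy), integral_Ioc_eq_integral_Ioo]

theorem hasDerivAt_of_eq_setIntegral_Ioo_add_setIntegral_Ioo {φ g : ℝ → E}
    (hf : ContinuousOn f (Ioo a b)) (hg : ContinuousOn g (Ioo a b))
    (hφ : ∀ y ∈ Ioo a b, φ y = (∫ t in Ioo a y, f t) + ∫ t in Ioo y b, g t)
    (hx : x ∈ Ioo a b) (hfi : IntegrableOn f (Ioo a x)) (hgi : IntegrableOn g (Ioo x b)) :
    HasDerivAt φ (f x - g x) x := by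
  rw [sub_eq_add_neg]
  exact ((hasDerivAt_setIntegral_Ioo_right hf hx hfi).add
    (hasDerivAt_setIntegral_Ioo_left hg hx hgi)).congr_of_eventuallyEq
    (eventually_of_mem (Ioo_mem_nhds hx.1 hx.2) hφ)

end SetIntegralDeriv

theorem integrableOn_mul_of_integrableOn_mul_abs {c φ : ℝ → ℝ} {s : Set ℝ}
    {μ : Measure ℝ}
    (h : IntegrableOn (fun t => c t * |φ t|) s μ)
    (hm : AEStronglyMeasurable (fun t => c t * φ t) (μ.restrict s)) :
    IntegrableOn (fun t => c t * φ t) s μ :=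
  Integrable.mono h hm <| ae_of_all _ fun t => by
    simp only [Real.norm_eq_abs, abs_mul, abs_abs, le_refl]

theorem eq_mul_exp_integral_of_hasDerivAt_mul {φ h : ℝ → ℝ} {a b c x : ℝ}
    (hh : ContinuousOn h (Ioo a b)) (hφ : ∀ y ∈ Ioo a b, HasDerivAt φ (h y * φ y) y)
    (hc : c ∈ Ioo a b) (hx : x ∈ Ioo a b) :
    φ x = φ c * Real.exp (∫ t in c..x, h t) := by
  have hH : ∀ y ∈ Ioo a b, HasDerivAt (fun y => ∫ t in c..y, h t) (h y) y := fun y hy =>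
    intervalIntegral.integral_hasDerivAt_right
      ((hh.mono (ordConnected_Ioo.uIcc_subset hc hy)).intervalIntegrable)
      (hh.stronglyMeasurableAtFilter isOpen_Ioo y hy) (hh.continuousAt (Ioo_mem_nhds hy.1 hy.2))
  have hψ : ∀ y ∈ Ioo a b,
      HasDerivAt (fun y => φ y * Real.exp (-∫ t in c..y, h t)) 0 y := fun y hy =>
    ((hφ y hy).mul (hH y hy).neg.exp).congr_deriv (by ring)
  have hconst := isOpen_Ioo.is_const_of_deriv_eq_zero isPreconnected_Ioo
    (fun y hy => (hψ y hy).differentiableAt.differentiableWithinAt) (fun y hy => (hψ y hy).deriv)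
    hx hc
  simp only [intervalIntegral.integral_same, neg_zero, Real.exp_zero, mul_one] at hconst
  rw [← hconst, mul_assoc, ← Real.exp_add, neg_add_cancel, Real.exp_zero, mul_one]

theorem stmt12_general (p : ℝ → ℝ) (hpcont : ContinuousOn p (Set.Icc (0 : ℝ) 1))
    (φ : ℝ → ℝ) (hφcont : ContinuousOn φ (Set.Ioo (0 : ℝ) 1))
    (hint1 : ∀ x ∈ Set.Ioo (0 : ℝ) 1,
      IntegrableOn (fun t => (1 - p t) / (1 - t) * |φ t|) (Set.Ioo (0 : ℝ) x))
    (hint2 : ∀ x ∈ Set.Ioo (0 : ℝ) 1,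
      IntegrableOn (fun t => p t / t * |φ t|) (Set.Ioo x (1 : ℝ)))
    (heq : ∀ x ∈ Set.Ioo (0 : ℝ) 1,
      φ x = (∫ t in Set.Ioo (0 : ℝ) x, (1 - p t) / (1 - t) * φ t) +
        ∫ t in Set.Ioo x (1 : ℝ), p t / t * φ t) :
    (∀ x ∈ Set.Ioo (0 : ℝ) 1,
      HasDerivAt φ (((1 - p x) / (1 - x) - p x / x) * φ x) x) ∧
    ∀ x ∈ Set.Ioo (0 : ℝ) 1,
      φ x = φ (1 / 2) *
        Real.exp ((∫ t in x..(1 / 2 : ℝ), p t / t) +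
          ∫ t in (1 / 2 : ℝ)..x, (1 - p t) / (1 - t)) := by
  have hp : ContinuousOn p (Ioo 0 1) := hpcont.mono Ioo_subset_Icc_self
  have hq : ContinuousOn (fun t => (1 - p t) / (1 - t)) (Ioo 0 1) :=
    (continuousOn_const.sub hp).div (continuousOn_const.sub continuousOn_id)
      fun t ht => sub_ne_zero.2 ht.2.ne'
  have hr : ContinuousOn (fun t => p t / t) (Ioo 0 1) :=
    hp.div continuousOn_id fun t ht => ht.1.ne'
  have hderiv : ∀ x ∈ Ioo (0 : ℝ) 1,
      HasDerivAt φ (((1 - p x) / (1 - x) - p x / x) * φ x) x := fun x hx => by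
    have hfi := integrableOn_mul_of_integrableOn_mul_abs (hint1 x hx) <|
      ((hq.mul hφcont).mono (Ioo_subset_Ioo_right hx.2.le)).aestronglyMeasurable
        measurableSet_Ioo
    have hgi := integrableOn_mul_of_integrableOn_mul_abs (hint2 x hx) <|
      ((hr.mul hφcont).mono (Ioo_subset_Ioo_left hx.1.le)).aestronglyMeasurable
        measurableSet_Ioo
    rw [sub_mul]
    exact hasDerivAt_of_eq_setIntegral_Ioo_add_setIntegral_Ioo (hq.mul hφcont) (hr.mul hφcont)
      heq hx hfi hgi
  refine ⟨hderiv, fun x hx => ?_⟩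
  have hhalf : (1 / 2 : ℝ) ∈ Ioo 0 1 := by norm_num
  have huIcc : uIcc (1 / 2) x ⊆ Ioo 0 1 := ordConnected_Ioo.uIcc_subset hhalf hx
  rw [eq_mul_exp_integral_of_hasDerivAt_mul (h := fun t => (1 - p t) / (1 - t) - p t / t)
      (hq.sub hr) hderiv hhalf hx,
    intervalIntegral.integral_sub ((hq.mono huIcc).intervalIntegrable)
      ((hr.mono huIcc).intervalIntegrable),
    intervalIntegral.integral_symm (1 / 2) x, neg_add_eq_sub]

/-- if `p : [0,1] → [0,1]` is continuous, `φ` is continuous on `(0,1)` with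
the appropriate integrability, and
`φ(x) = ∫₀^x (q(t)/(1−t))φ(t) dt + ∫_x^1 (p(t)/t)φ(t) dt` on `(0,1)`, then `φ` is
differentiable there with `φ'(x) = (q(x)/(1−x) − p(x)/x)φ(x)`, and consequently
`φ(x) = φ(1/2)·exp(∫_x^{1/2} p(t)/t dt + ∫_{1/2}^x q(t)/(1−t) dt)` on `(0,1)`. -/
theorem stmt12 (p : ℝ → ℝ) (hpcont : ContinuousOn p (Set.Icc (0 : ℝ) 1))
    (hp01 : ∀ x ∈ Set.Icc (0 : ℝ) 1, p x ∈ Set.Icc (0 : ℝ) 1)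
    (φ : ℝ → ℝ) (hφcont : ContinuousOn φ (Set.Ioo (0 : ℝ) 1))
    (hint1 : ∀ x ∈ Set.Ioo (0 : ℝ) 1,
      IntegrableOn (fun t => (1 - p t) / (1 - t) * |φ t|) (Set.Ioo (0 : ℝ) x))
    (hint2 : ∀ x ∈ Set.Ioo (0 : ℝ) 1,
      IntegrableOn (fun t => p t / t * |φ t|) (Set.Ioo x (1 : ℝ)))
    (heq : ∀ x ∈ Set.Ioo (0 : ℝ) 1,
      φ x = (∫ t in Set.Ioo (0 : ℝ) x, (1 - p t) / (1 - t) * φ t) +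
        ∫ t in Set.Ioo x (1 : ℝ), p t / t * φ t) :
    (∀ x ∈ Set.Ioo (0 : ℝ) 1,
      HasDerivAt φ (((1 - p x) / (1 - x) - p x / x) * φ x) x) ∧
    ∀ x ∈ Set.Ioo (0 : ℝ) 1,
      φ x = φ (1 / 2) *
        Real.exp ((∫ t in x..(1 / 2 : ℝ), p t / t) +
          ∫ t in (1 / 2 : ℝ)..x, (1 - p t) / (1 - t)) :=
  stmt12_general p hpcont φ hφcont hint1 hint2 heq
end

section
/- Let α ∈ (0,1] and let p ∈ H_α[0,1] take values in [0,1], with q = 1−p. Then for every φ ∈ H_α[0,1], the function Qφ belongs to H_α[0,1] and ‖Qφ‖_α ≤ (1/(α+1)) ‖φ‖_α + (1 + 2 m_α(p)) sup|φ|. -/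
open MeasureTheory Filter Set

/-- `sup_{[0,1]} |φ|`. -/
noncomputable def supAbsI (φ : ℝ → ℝ) : ℝ := ⨆ x : Set.Icc (0 : ℝ) 1, |φ x|

/-- The α-Hölder seminorm of `φ` on `[0,1]`, as the least admissible Hölder constant. -/
noncomputable def holderSemiI (α : ℝ) (φ : ℝ → ℝ) : ℝ :=
  sInf {m : ℝ | 0 ≤ m ∧ HolderOnI α m φ}

/-- The α-Hölder norm `‖φ‖_α = sup|φ| + m_α(φ)` on `[0,1]`. -/
noncomputable def holderNormI (α : ℝ) (φ : ℝ → ℝ) : ℝ := supAbsI φ + holderSemiI α φ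

section Aux

variable {α M : ℝ} {φ : ℝ → ℝ}

lemma holderOnI_max (h : HolderOnI α M φ) : HolderOnI α (max M 0) φ := fun x hx y hy =>
  (h x hx y hy).trans
    (mul_le_mul_of_nonneg_right (le_max_left _ _) (Real.rpow_nonneg (abs_nonneg _) _))

lemma holderOnI_continuousOn (hα0 : 0 < α) (hM : 0 ≤ M) (h : HolderOnI α M φ) :
    ContinuousOn φ (Set.Icc 0 1) := by
  intro x hx
  rw [Metric.continuousWithinAt_iff]
  intro ε hε
  have hM1 : (0:ℝ) < M + 1 := by linarith
  refine ⟨(ε / (M + 1)) ^ α⁻¹, Real.rpow_pos_of_pos (div_pos hε hM1) _, ?_⟩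
  intro y hy hdist
  rw [Real.dist_eq] at hdist ⊢
  calc |φ y - φ x| ≤ M * |y - x| ^ α := h y hy x hx
    _ ≤ M * ((ε / (M + 1)) ^ α⁻¹) ^ α :=
        mul_le_mul_of_nonneg_left
          (Real.rpow_le_rpow (abs_nonneg _) hdist.le hα0.le) hM
    _ = M * (ε / (M + 1)) := by
        rw [Real.rpow_inv_rpow (by positivity) hα0.ne']
    _ < ε := by
        have h1 : (M + 1) * (ε / (M + 1)) = ε := mul_div_cancel₀ ε hM1.ne'
        nlinarith [div_pos hε hM1]

lemma argMem {x c t : ℝ} (hx : x ∈ Set.Icc (0:ℝ) 1) (hc : c ∈ Set.Icc (0:ℝ) 1)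
    (ht : t ∈ Set.Icc (0:ℝ) 1) : t * x + c * (1 - t) ∈ Set.Icc (0:ℝ) 1 := by
  obtain ⟨hx0, hx1⟩ := hx; obtain ⟨hc0, hc1⟩ := hc; obtain ⟨ht0, ht1⟩ := ht
  constructor <;> nlinarith

lemma contArg {x c : ℝ} (hcont : ContinuousOn φ (Set.Icc 0 1)) (hx : x ∈ Set.Icc (0:ℝ) 1)
    (hc : c ∈ Set.Icc (0:ℝ) 1) :
    ContinuousOn (fun t => φ (t * x + c * (1 - t))) (Set.Icc (0:ℝ) 1) :=
  hcont.comp (Continuous.continuousOn (by continuity)) (fun t ht => argMem hx hc ht)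

lemma intArg {x c : ℝ} (hcont : ContinuousOn φ (Set.Icc 0 1)) (hx : x ∈ Set.Icc (0:ℝ) 1)
    (hc : c ∈ Set.Icc (0:ℝ) 1) :
    IntervalIntegrable (fun t => φ (t * x + c * (1 - t))) volume 0 1 :=
  ContinuousOn.intervalIntegrable (by rw [Set.uIcc_of_le zero_le_one]; exact contArg hcont hx hc)

lemma bddAbove_absI (hα0 : 0 < α) (hM : 0 ≤ M) (h : HolderOnI α M φ) :
    BddAbove (Set.range fun x : Set.Icc (0:ℝ) 1 => |φ x|) := by
  refine ⟨|φ 0| + M, ?_⟩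
  rintro _ ⟨⟨x, hx⟩, rfl⟩
  have h1 := h x hx 0 (by norm_num)
  have habs : |x - 0| ^ α ≤ 1 := by
    rw [sub_zero]
    exact Real.rpow_le_one (abs_nonneg x)
      (by rw [abs_of_nonneg hx.1]; exact hx.2) hα0.le
  have h2 : |φ x - φ 0| ≤ M := h1.trans (by nlinarith [Real.rpow_nonneg (abs_nonneg (x - 0)) α])
  calc |φ x| = |φ x - φ 0 + φ 0| := by ring_nf
    _ ≤ |φ x - φ 0| + |φ 0| := abs_add_le _ _
    _ ≤ |φ 0| + M := by linarith

lemma le_supAbsI (hbdd : BddAbove (Set.range fun x : Set.Icc (0:ℝ) 1 => |φ x|))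
    {x : ℝ} (hx : x ∈ Set.Icc (0:ℝ) 1) : |φ x| ≤ supAbsI φ :=
  le_ciSup hbdd (⟨x, hx⟩ : Set.Icc (0:ℝ) 1)

lemma supAbsI_nonneg (hbdd : BddAbove (Set.range fun x : Set.Icc (0:ℝ) 1 => |φ x|)) :
    0 ≤ supAbsI φ :=
  (abs_nonneg _).trans (le_supAbsI hbdd (by norm_num : (0:ℝ) ∈ Set.Icc (0:ℝ) 1))

lemma holderSemiI_nonneg : 0 ≤ holderSemiI α φ :=
  Real.sInf_nonneg fun _ hm => hm.1

lemma holderSemiI_le {K : ℝ} (hK : 0 ≤ K) (h : HolderOnI α K φ) : holderSemiI α φ ≤ K :=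
  csInf_le ⟨0, fun _ hm => hm.1⟩ ⟨hK, h⟩

lemma holderOnI_semi (hα0 : 0 < α) (hφ : ∃ M, HolderOnI α M φ) :
    HolderOnI α (holderSemiI α φ) φ := by
  obtain ⟨M, hM⟩ := hφ
  intro x hx y hy
  rcases eq_or_ne x y with rfl | hxy
  · simp [Real.zero_rpow hα0.ne']
  · have hd : 0 < |x - y| ^ α :=
      Real.rpow_pos_of_pos (abs_pos.2 (sub_ne_zero.2 hxy)) _
    rw [← div_le_iff₀ hd]
    refine le_csInf ⟨max M 0, le_max_right _ _, holderOnI_max hM⟩ ?_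
    rintro m ⟨_, hm⟩
    rw [div_le_iff₀ hd]
    exact hm x hx y hy

lemma integral_abs_bound {x c : ℝ} (hcont : ContinuousOn φ (Set.Icc 0 1))
    (hbdd : BddAbove (Set.range fun z : Set.Icc (0:ℝ) 1 => |φ z|))
    (hx : x ∈ Set.Icc (0:ℝ) 1) (hc : c ∈ Set.Icc (0:ℝ) 1) :
    |∫ t in (0:ℝ)..1, φ (t * x + c * (1 - t))| ≤ supAbsI φ := by
  have hb := intervalIntegral.norm_integral_le_of_norm_le_const
    (C := supAbsI φ) (f := fun t => φ (t * x + c * (1 - t))) (a := 0) (b := 1) ?_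
  · simpa using hb
  · intro t ht
    rw [Set.uIoc_of_le zero_le_one] at ht
    have ht' : t ∈ Set.Icc (0:ℝ) 1 := ⟨ht.1.le, ht.2⟩
    exact le_supAbsI hbdd (argMem hx hc ht')

lemma integral_diff_bound (hα0 : 0 < α) (hM : 0 ≤ M) (h : HolderOnI α M φ)
    {x y c : ℝ} (hx : x ∈ Set.Icc (0:ℝ) 1) (hy : y ∈ Set.Icc (0:ℝ) 1)
    (hc : c ∈ Set.Icc (0:ℝ) 1) :
    |(∫ t in (0:ℝ)..1, φ (t * x + c * (1 - t))) -
      ∫ t in (0:ℝ)..1, φ (t * y + c * (1 - t))| ≤ (M / (α + 1)) * |x - y| ^ α := by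
  have hcont := holderOnI_continuousOn hα0 hM h
  have hfi := intArg hcont hx hc
  have hgi := intArg hcont hy hc
  rw [← intervalIntegral.integral_sub hfi hgi]
  have h1 := intervalIntegral.abs_integral_le_integral_abs (a := 0) (b := 1)
    (f := fun t => φ (t * x + c * (1 - t)) - φ (t * y + c * (1 - t))) (μ := volume) zero_le_one
  refine h1.trans ?_
  have habsi : IntervalIntegrable
      (fun t => |φ (t * x + c * (1 - t)) - φ (t * y + c * (1 - t))|) volume 0 1 :=
    ContinuousOn.intervalIntegrable (by
      rw [Set.uIcc_of_le zero_le_one]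
      exact ((contArg hcont hx hc).sub (contArg hcont hy hc)).abs)
  have hBi : IntervalIntegrable (fun t : ℝ => M * |x - y| ^ α * t ^ α) volume 0 1 :=
    (intervalIntegral.intervalIntegrable_rpow (Or.inl hα0.le)).const_mul _
  have h2 : (∫ t in (0:ℝ)..1, |φ (t * x + c * (1 - t)) - φ (t * y + c * (1 - t))|)
      ≤ ∫ t in (0:ℝ)..1, M * |x - y| ^ α * t ^ α := by
    apply intervalIntegral.integral_mono_on zero_le_one habsi hBi
    intro t ht
    calc |φ (t * x + c * (1 - t)) - φ (t * y + c * (1 - t))|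
        ≤ M * |(t * x + c * (1 - t)) - (t * y + c * (1 - t))| ^ α :=
          h _ (argMem hx hc ht) _ (argMem hy hc ht)
      _ = M * |x - y| ^ α * t ^ α := by
          have he : (t * x + c * (1 - t)) - (t * y + c * (1 - t)) = t * (x - y) := by ring
          rw [he, abs_mul, abs_of_nonneg ht.1, Real.mul_rpow ht.1 (abs_nonneg _)]
          ring
  refine h2.trans_eq ?_
  rw [intervalIntegral.integral_const_mul, integral_rpow (Or.inl (by linarith))]
  rw [Real.one_rpow, Real.zero_rpow (by linarith : α + 1 ≠ 0)]
  ring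

end Aux

/-- for `p ∈ H_α[0,1]` with values in `[0,1]`, the Diaconis–Friedman
operator maps `H_α[0,1]` into itself with
`‖Qφ‖_α ≤ (1/(α+1))‖φ‖_α + (1 + 2 m_α(p)) sup|φ|`. -/
theorem stmt15 (α : ℝ) (hα0 : 0 < α) (hα1 : α ≤ 1)
    (p : ℝ → ℝ) (hpH : ∃ M : ℝ, HolderOnI α M p)
    (hp01 : ∀ x ∈ Set.Icc (0 : ℝ) 1, p x ∈ Set.Icc (0 : ℝ) 1)
    (φ : ℝ → ℝ) (hφH : ∃ M : ℝ, HolderOnI α M φ) :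
    (∃ M : ℝ, HolderOnI α M (DFQ p φ)) ∧
      holderNormI α (DFQ p φ)
        ≤ (1 / (α + 1)) * holderNormI α φ + (1 + 2 * holderSemiI α p) * supAbsI φ := by
  obtain ⟨Mφ0, hφ0⟩ := hφH
  obtain ⟨Mp0, hp0⟩ := hpH
  have hm0 : 0 ≤ holderSemiI α φ := holderSemiI_nonneg
  have hmp0 : 0 ≤ holderSemiI α p := holderSemiI_nonneg
  have hφm : HolderOnI α (holderSemiI α φ) φ := holderOnI_semi hα0 ⟨_, hφ0⟩
  have hpm : HolderOnI α (holderSemiI α p) p := holderOnI_semi hα0 ⟨_, hp0⟩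
  have hbdd : BddAbove (Set.range fun x : Set.Icc (0:ℝ) 1 => |φ x|) :=
    bddAbove_absI hα0 hm0 hφm
  have hS0 : 0 ≤ supAbsI φ := supAbsI_nonneg hbdd
  have hcont : ContinuousOn φ (Set.Icc 0 1) := holderOnI_continuousOn hα0 hm0 hφm
  have hc0 : (0:ℝ) ∈ Set.Icc (0:ℝ) 1 := by norm_num
  have hc1 : (1:ℝ) ∈ Set.Icc (0:ℝ) 1 := by norm_num
  -- rewrite the operator in the unified form
  have hDFQ : ∀ x : ℝ, DFQ p φ x =
      p x * (∫ t in (0:ℝ)..1, φ (t * x + 0 * (1 - t))) +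
      (1 - p x) * ∫ t in (0:ℝ)..1, φ (t * x + 1 * (1 - t)) := by
    intro x
    unfold DFQ
    congr 1
    · congr 1
      apply intervalIntegral.integral_congr
      intro t _
      norm_num
    · congr 1
      apply intervalIntegral.integral_congr
      intro t _
      congr 1
      ring
  set K : ℝ := holderSemiI α φ / (α + 1) + 2 * holderSemiI α p * supAbsI φ with hKdef
  have hK0 : 0 ≤ K := by
    have : 0 ≤ holderSemiI α φ / (α + 1) := by positivity
    have : 0 ≤ 2 * holderSemiI α p * supAbsI φ := by positivity
    unfold K; positivity
  have key : HolderOnI α K (DFQ p φ) := by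
    intro x hx y hy
    have hA := integral_diff_bound hα0 hm0 hφm hx hy hc0
    have hB := integral_diff_bound hα0 hm0 hφm hx hy hc1
    have hAy := integral_abs_bound hcont hbdd hy hc0
    have hBy := integral_abs_bound hcont hbdd hy hc1
    have hpd := hpm x hx y hy
    have hpx := hp01 x hx
    rw [hDFQ x, hDFQ y]
    set Ax := ∫ t in (0:ℝ)..1, φ (t * x + 0 * (1 - t))
    set Ay := ∫ t in (0:ℝ)..1, φ (t * y + 0 * (1 - t))
    set Bx := ∫ t in (0:ℝ)..1, φ (t * x + 1 * (1 - t))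
    set By := ∫ t in (0:ℝ)..1, φ (t * y + 1 * (1 - t))
    set d := |x - y| ^ α with hddef
    have hd0 : 0 ≤ d := Real.rpow_nonneg (abs_nonneg _) _
    have expand : (p x * Ax + (1 - p x) * Bx) - (p y * Ay + (1 - p y) * By)
        = p x * (Ax - Ay) + (1 - p x) * (Bx - By) + (p x - p y) * (Ay - By) := by ring
    have t1 : |p x * (Ax - Ay)| ≤ p x * (holderSemiI α φ / (α + 1) * d) := by
      rw [abs_mul, abs_of_nonneg hpx.1]
      exact mul_le_mul_of_nonneg_left hA hpx.1
    have t2 : |(1 - p x) * (Bx - By)| ≤ (1 - p x) * (holderSemiI α φ / (α + 1) * d) := by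
      rw [abs_mul, abs_of_nonneg (by linarith [hpx.2] : (0:ℝ) ≤ 1 - p x)]
      exact mul_le_mul_of_nonneg_left hB (by linarith [hpx.2])
    have t3 : |(p x - p y) * (Ay - By)| ≤ (holderSemiI α p * d) * (2 * supAbsI φ) := by
      rw [abs_mul]
      have hAB : |Ay - By| ≤ 2 * supAbsI φ := by
        calc |Ay - By| ≤ |Ay| + |By| := abs_sub _ _
          _ ≤ 2 * supAbsI φ := by linarith
      exact mul_le_mul hpd hAB (abs_nonneg _) (by positivity)
    calc |(p x * Ax + (1 - p x) * Bx) - (p y * Ay + (1 - p y) * By)|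
        = |p x * (Ax - Ay) + (1 - p x) * (Bx - By) + (p x - p y) * (Ay - By)| := by
          rw [expand]
      _ ≤ |p x * (Ax - Ay) + (1 - p x) * (Bx - By)| + |(p x - p y) * (Ay - By)| :=
          abs_add_le _ _
      _ ≤ |p x * (Ax - Ay)| + |(1 - p x) * (Bx - By)| + |(p x - p y) * (Ay - By)| := by
          linarith [abs_add_le (p x * (Ax - Ay)) ((1 - p x) * (Bx - By))]
      _ ≤ p x * (holderSemiI α φ / (α + 1) * d) + (1 - p x) * (holderSemiI α φ / (α + 1) * d)
            + (holderSemiI α p * d) * (2 * supAbsI φ) := by linarith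
      _ = K * d := by unfold K; ring
  refine ⟨⟨K, key⟩, ?_⟩
  -- sup bound
  haveI : Nonempty (Set.Icc (0:ℝ) 1) := ⟨⟨0, hc0⟩⟩
  have hsup : supAbsI (DFQ p φ) ≤ supAbsI φ := by
    apply ciSup_le
    rintro ⟨x, hx⟩
    have hAx := integral_abs_bound hcont hbdd hx hc0
    have hBx := integral_abs_bound hcont hbdd hx hc1
    have hpx := hp01 x hx
    rw [hDFQ x]
    calc |p x * (∫ t in (0:ℝ)..1, φ (t * x + 0 * (1 - t))) +
        (1 - p x) * ∫ t in (0:ℝ)..1, φ (t * x + 1 * (1 - t))|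
        ≤ |p x * (∫ t in (0:ℝ)..1, φ (t * x + 0 * (1 - t)))| +
          |(1 - p x) * ∫ t in (0:ℝ)..1, φ (t * x + 1 * (1 - t))| := abs_add_le _ _
      _ ≤ p x * supAbsI φ + (1 - p x) * supAbsI φ := by
          rw [abs_mul, abs_mul, abs_of_nonneg hpx.1,
            abs_of_nonneg (by linarith [hpx.2] : (0:ℝ) ≤ 1 - p x)]
          have := mul_le_mul_of_nonneg_left hAx hpx.1
          have := mul_le_mul_of_nonneg_left hBx (by linarith [hpx.2] : (0:ℝ) ≤ 1 - p x)
          linarith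
      _ = supAbsI φ := by ring
  have hsemi : holderSemiI α (DFQ p φ) ≤ K := holderSemiI_le hK0 key
  unfold holderNormI
  have hfin : (1 / (α + 1)) * (supAbsI φ + holderSemiI α φ) + (1 + 2 * holderSemiI α p) * supAbsI φ
      = supAbsI φ + K + supAbsI φ * (1 / (α + 1)) := by
    unfold K; field_simp; ring
  rw [hfin]
  have hpos : 0 ≤ supAbsI φ * (1 / (α + 1)) := by positivity
  calc supAbsI (DFQ p φ) + holderSemiI α (DFQ p φ) ≤ supAbsI φ + K := add_le_add hsup hsemi
    _ ≤ supAbsI φ + K + supAbsI φ * (1 / (α + 1)) := le_add_of_nonneg_right hpos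
end

section
/- Let p:[0,1]→[0,1] be continuous with q = 1−p, and assume q(0) > 0 and p(1) > 0. Then the only nonempty Q-absorbing compact subset of [0,1] is [0,1] itself: for every compact proper nonempty subset K ⊊ [0,1] there exists x₀ ∈ K with Q(x₀, [0,1]∖K) > 0. -/
open MeasureTheory Filter Set

/-- The Diaconis–Friedman transition kernel:
`Q(x,A) = p(x)·λ{t ∈ [0,1] : tx ∈ A} + q(x)·λ{t ∈ [0,1] : tx+1−t ∈ A}`. -/
noncomputable def DFkernel (p : ℝ → ℝ) (x : ℝ) (A : Set ℝ) : ENNReal :=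
  ENNReal.ofReal (p x) * volume {t ∈ Set.Icc (0 : ℝ) 1 | t * x ∈ A} +
    ENNReal.ofReal (1 - p x) * volume {t ∈ Set.Icc (0 : ℝ) 1 | t * x + 1 - t ∈ A}

/-- Near any point of the complement of a closed set there is a gap interval. -/
lemma df_gap_lemma (K : Set ℝ) (hcl : IsClosed K) (c y : ℝ) (hc : 0 < c)
    (hy0 : 0 ≤ y) (hyc : y ≤ c) (hyK : y ∉ K) :
    ∃ a b : ℝ, 0 ≤ a ∧ a < b ∧ b ≤ c ∧ ∀ z ∈ Set.Ioo a b, z ∉ K := by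
  obtain ⟨ε, hε, hball⟩ := Metric.isOpen_iff.mp hcl.isOpen_compl y hyK
  refine ⟨max 0 (y - ε), min c (y + ε), le_max_left _ _,
    lt_min (max_lt hc (by linarith)) (max_lt (by linarith) (by linarith)),
    min_le_left _ _, fun z hz => ?_⟩
  apply hball
  rw [Real.ball_eq_Ioo]
  exact ⟨lt_of_le_of_lt (le_max_right 0 (y - ε)) hz.1,
    lt_of_lt_of_le hz.2 (min_le_right c (y + ε))⟩

/-- If the first term of the kernel sees a gap below `x`, the kernel is positive. -/
lemma df_first_pos (p : ℝ → ℝ) (K : Set ℝ) (x a b : ℝ) (ha : 0 ≤ a) (hab : a < b)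
    (hbx : b ≤ x) (hx1 : x ≤ 1) (hgap : ∀ z ∈ Set.Ioo a b, z ∈ Set.Icc (0:ℝ) 1 \ K)
    (hp : 0 < p x) : 0 < DFkernel p x (Set.Icc (0 : ℝ) 1 \ K) := by
  have hx : 0 < x := lt_of_lt_of_le (ha.trans_lt hab) hbx
  have hsub : Set.Ioo (a / x) (b / x) ⊆
      {t ∈ Set.Icc (0 : ℝ) 1 | t * x ∈ Set.Icc (0:ℝ) 1 \ K} := by
    intro t ht
    have h1 : a < t * x := (div_lt_iff₀ hx).mp ht.1
    have h2 : t * x < b := (lt_div_iff₀ hx).mp ht.2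
    refine ⟨⟨le_of_lt (lt_of_le_of_lt (div_nonneg ha hx.le) ht.1), ?_⟩, hgap _ ⟨h1, h2⟩⟩
    have : t < b / x := ht.2
    have hb1 : b / x ≤ 1 := (div_le_one hx).mpr hbx
    linarith
  have hv : 0 < volume {t ∈ Set.Icc (0 : ℝ) 1 | t * x ∈ Set.Icc (0:ℝ) 1 \ K} := by
    refine lt_of_lt_of_le ?_ (measure_mono hsub)
    rw [Real.volume_Ioo]
    apply ENNReal.ofReal_pos.mpr
    have : a / x < b / x := by gcongr
    linarith
  have h1 : 0 < ENNReal.ofReal (p x) *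
      volume {t ∈ Set.Icc (0 : ℝ) 1 | t * x ∈ Set.Icc (0:ℝ) 1 \ K} :=
    ENNReal.mul_pos (ENNReal.ofReal_pos.mpr hp).ne' hv.ne'
  exact lt_of_lt_of_le h1 le_self_add

/-- If `q(x) > 0` and `K` is bounded above by `M < 1`, the kernel is positive. -/
lemma df_second_pos (p : ℝ → ℝ) (K : Set ℝ) (M x : ℝ) (hx0 : 0 ≤ x) (hx1 : x ≤ 1)
    (hM0 : 0 ≤ M) (hM1 : M < 1) (hmax : ∀ z ∈ K, z ≤ M) (hq : 0 < 1 - p x) :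
    0 < DFkernel p x (Set.Icc (0 : ℝ) 1 \ K) := by
  have hsub : Set.Ico (0:ℝ) (1 - M) ⊆
      {t ∈ Set.Icc (0 : ℝ) 1 | t * x + 1 - t ∈ Set.Icc (0:ℝ) 1 \ K} := by
    intro t ht
    obtain ⟨ht0, ht1⟩ := ht
    have htx : 0 ≤ t * x := mul_nonneg ht0 hx0
    have htx' : t * x ≤ t := by nlinarith
    refine ⟨⟨ht0, by linarith⟩, ⟨⟨by linarith, by linarith⟩, fun hmem => ?_⟩⟩
    have := hmax _ hmem
    linarith
  have hv : 0 < volume {t ∈ Set.Icc (0 : ℝ) 1 | t * x + 1 - t ∈ Set.Icc (0:ℝ) 1 \ K} := by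
    refine lt_of_lt_of_le ?_ (measure_mono hsub)
    rw [Real.volume_Ico]
    apply ENNReal.ofReal_pos.mpr
    linarith
  have h2 : 0 < ENNReal.ofReal (1 - p x) *
      volume {t ∈ Set.Icc (0 : ℝ) 1 | t * x + 1 - t ∈ Set.Icc (0:ℝ) 1 \ K} :=
    ENNReal.mul_pos (ENNReal.ofReal_pos.mpr hq).ne' hv.ne'
  exact lt_of_lt_of_le h2 le_add_self

/-- if `p` is continuous with values in `[0,1]`, `q(0) > 0` and `p(1) > 0`,
then the only nonempty `Q`-absorbing compact subset of `[0,1]` is `[0,1]` itself: every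
compact proper nonempty `K ⊊ [0,1]` contains a point `x₀` with `Q(x₀,[0,1]∖K) > 0`. -/
theorem stmt16 (p : ℝ → ℝ) (hpcont : ContinuousOn p (Set.Icc (0 : ℝ) 1))
    (hp01 : ∀ x ∈ Set.Icc (0 : ℝ) 1, p x ∈ Set.Icc (0 : ℝ) 1)
    (hq0 : 0 < 1 - p 0) (hp1 : 0 < p 1) :
    ∀ K : Set ℝ, K ⊆ Set.Icc (0 : ℝ) 1 → IsCompact K → K.Nonempty →
      K ≠ Set.Icc (0 : ℝ) 1 →
      ∃ x₀ ∈ K, 0 < DFkernel p x₀ (Set.Icc (0 : ℝ) 1 \ K) := by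
  intro K hKsub hKc hKne hKneq
  obtain ⟨M, hMK, hMub⟩ := hKc.exists_isGreatest hKne
  have hM01 := hKsub hMK
  obtain ⟨y, hy, hyK⟩ : ∃ y, y ∈ Set.Icc (0:ℝ) 1 ∧ y ∉ K := by
    by_contra h
    push_neg at h
    exact hKneq (Subset.antisymm hKsub (fun z hz => h z hz))
  by_cases hM1 : M = 1
  · refine ⟨M, hMK, ?_⟩
    subst hM1
    obtain ⟨a, b, ha, hab, hb, hgap⟩ :=
      df_gap_lemma K hKc.isClosed 1 y one_pos hy.1 hy.2 hyK
    exact df_first_pos p K 1 a b ha hab hb le_rfl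
      (fun z hz => ⟨⟨le_of_lt (lt_of_le_of_lt ha hz.1), le_of_lt (lt_of_lt_of_le hz.2 hb)⟩,
        hgap z hz⟩) hp1
  · have hMlt : M < 1 := lt_of_le_of_ne hM01.2 hM1
    by_cases hqM : 0 < 1 - p M
    · exact ⟨M, hMK, df_second_pos p K M M hM01.1 hM01.2 hM01.1 hMlt
        (fun z hz => hMub hz) hqM⟩
    · have hpM : 0 < p M := by linarith
      by_cases hy' : ∃ y', y' ∈ Set.Ico (0:ℝ) M ∧ y' ∉ K
      · obtain ⟨y', hy'm, hy'K⟩ := hy'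
        obtain ⟨a, b, ha, hab, hb, hgap⟩ := df_gap_lemma K hKc.isClosed M y'
          (lt_of_le_of_lt hy'm.1 hy'm.2) hy'm.1 hy'm.2.le hy'K
        refine ⟨M, hMK, df_first_pos p K M a b ha hab hb hM01.2
          (fun z hz => ⟨⟨le_of_lt (lt_of_le_of_lt ha hz.1),
            le_of_lt (lt_of_lt_of_le hz.2 (hb.trans hM01.2))⟩, hgap z hz⟩) hpM⟩
      · push_neg at hy'
        have h0K : (0:ℝ) ∈ K := by
          rcases eq_or_lt_of_le hM01.1 with h | h
          · exact h ▸ hMK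
          · exact hy' 0 ⟨le_rfl, h⟩
        exact ⟨0, h0K, df_second_pos p K M 0 le_rfl zero_le_one hM01.1 hMlt
          (fun z hz => hMub hz) hq0⟩
end

section
/- Let p:[0,1]→[0,1] be continuous with q = 1−p, and assume q(0) = 0 and p(1) > 0. Then the singleton {0} is a Q-absorbing compact set, and every nonempty Q-absorbing compact subset of [0,1] contains 0; consequently {0} is the unique minimal nonempty Q-absorbing compact set. -/
open MeasureTheory Filter Set

/-- `K` is a `Q`-absorbing set: `Q(x, [0,1]∖K) = 0` for every `x ∈ K`. -/
def DFAbsorbing (p : ℝ → ℝ) (K : Set ℝ) : Prop :=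
  ∀ x ∈ K, DFkernel p x (Set.Icc (0 : ℝ) 1 \ K) = 0

/-!
An absorbing `K ⊆ [0,1]` contains almost every point reached by a move of positive probability
from a point of `K`; being closed, it then contains all of them: if `p(x) > 0` then
`[0, x] ⊆ K`, and if `q(x) > 0` then `[x, 1] ⊆ K`. Since `p + q = 1`, any `x ∈ K` gives `0 ∈ K`
directly or gives `1 ∈ K`, and from `1` the condition `p(1) > 0` again gives `0 ∈ K`.
As `q(0) = 0`, `{0}` is itself absorbing.
-/

theorem Icc_subset_of_measure_Icc_diff_eq_zero {μ : Measure ℝ} [μ.IsOpenPosMeasure]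
    {a b : ℝ} (hab : a < b) {C : Set ℝ} (hC : IsClosed C) (h : μ (Icc a b \ C) = 0) :
    Icc a b ⊆ C := by
  have hIoo : Ioo a b \ C = ∅ :=
    (isOpen_Ioo.sdiff hC).measure_eq_zero_iff μ |>.1 <|
      measure_mono_null (sdiff_subset_sdiff_left Ioo_subset_Icc_self) h
  rw [← closure_Ioo hab.ne, hC.closure_subset_iff]
  exact sdiff_eq_empty.1 hIoo

theorem mapsTo_of_volume_preimage_diff_eq_zero {f : ℝ → ℝ} (hf : Continuous f)
    (hmaps : MapsTo f (Icc 0 1) (Icc 0 1)) {K : Set ℝ} (hK : IsClosed K)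
    (h : volume {t ∈ Icc (0 : ℝ) 1 | f t ∈ Icc (0 : ℝ) 1 \ K} = 0) :
    MapsTo f (Icc 0 1) K := by
  have hsub : Icc 0 1 \ f ⁻¹' K ⊆ {t ∈ Icc (0 : ℝ) 1 | f t ∈ Icc (0 : ℝ) 1 \ K} :=
    fun t ⟨ht, htK⟩ => ⟨ht, hmaps ht, htK⟩
  exact Icc_subset_of_measure_Icc_diff_eq_zero zero_lt_one (hK.preimage hf)
    (measure_mono_null hsub h)

theorem DFkernel_eq_zero_iff {p : ℝ → ℝ} {x : ℝ} {A : Set ℝ} :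
    DFkernel p x A = 0 ↔
      (p x ≤ 0 ∨ volume {t ∈ Icc (0 : ℝ) 1 | t * x ∈ A} = 0) ∧
        (1 - p x ≤ 0 ∨ volume {t ∈ Icc (0 : ℝ) 1 | t * x + 1 - t ∈ A} = 0) := by
  simp only [DFkernel, add_eq_zero, mul_eq_zero, ENNReal.ofReal_eq_zero]

theorem dfAbsorbing_singleton_zero {p : ℝ → ℝ} (hq0 : 1 - p 0 = 0) :
    DFAbsorbing p {0} := by
  rintro x rfl
  refine DFkernel_eq_zero_iff.2 ⟨Or.inr ?_, Or.inl hq0.le⟩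
  simp

namespace DFAbsorbing

variable {p : ℝ → ℝ} {K : Set ℝ} {x : ℝ}

theorem mapsTo_mul (hK : DFAbsorbing p K) (hKc : IsClosed K) (hKsub : K ⊆ Icc 0 1)
    (hx : x ∈ K) (hpx : 0 < p x) : MapsTo (· * x) (Icc 0 1) K := by
  obtain ⟨hx0, hx1⟩ := hKsub hx
  refine mapsTo_of_volume_preimage_diff_eq_zero (continuous_mul_const x) ?_ hKc
    ((DFkernel_eq_zero_iff.1 (hK x hx)).1.resolve_left hpx.not_ge)
  exact fun t ⟨ht0, ht1⟩ => ⟨by positivity, by nlinarith⟩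

theorem mapsTo_lerp_one (hK : DFAbsorbing p K) (hKc : IsClosed K) (hKsub : K ⊆ Icc 0 1)
    (hx : x ∈ K) (hpx : p x < 1) : MapsTo (fun t => t * x + 1 - t) (Icc 0 1) K := by
  obtain ⟨hx0, hx1⟩ := hKsub hx
  refine mapsTo_of_volume_preimage_diff_eq_zero (by fun_prop) ?_ hKc
    ((DFkernel_eq_zero_iff.1 (hK x hx)).2.resolve_left (by linarith))
  exact fun t ⟨ht0, ht1⟩ => ⟨by nlinarith, by nlinarith⟩

theorem zero_mem (hK : DFAbsorbing p K) (hKc : IsClosed K) (hKsub : K ⊆ Icc 0 1)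
    (hne : K.Nonempty) (hp1 : 0 < p 1) : (0 : ℝ) ∈ K := by
  have zero_mem_of_pos : ∀ y ∈ K, 0 < p y → (0 : ℝ) ∈ K := fun y hy hpy => by
    simpa using hK.mapsTo_mul hKc hKsub hy hpy (left_mem_Icc.2 zero_le_one)
  obtain ⟨x, hx⟩ := hne
  rcases lt_or_ge 0 (p x) with hpx | hpx
  · exact zero_mem_of_pos x hx hpx
  · have h1 : (1 : ℝ) ∈ K := by
      simpa using hK.mapsTo_lerp_one hKc hKsub hx (by linarith) (left_mem_Icc.2 zero_le_one)
    exact zero_mem_of_pos 1 h1 hp1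

end DFAbsorbing

theorem stmt17_general (p : ℝ → ℝ) (hq0 : 1 - p 0 = 0) (hp1 : 0 < p 1) :
    DFAbsorbing p {(0 : ℝ)} ∧
    (∀ K : Set ℝ, K ⊆ Set.Icc (0 : ℝ) 1 → IsCompact K → K.Nonempty →
      DFAbsorbing p K → (0 : ℝ) ∈ K) ∧
    ∀ K : Set ℝ, K ⊆ Set.Icc (0 : ℝ) 1 → IsCompact K → K.Nonempty → DFAbsorbing p K →
      (∀ K' : Set ℝ, K' ⊆ K → IsCompact K' → K'.Nonempty → DFAbsorbing p K' → K' = K) →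
      K = {(0 : ℝ)} := by
  have hzero : DFAbsorbing p {0} := dfAbsorbing_singleton_zero hq0
  have hmem : ∀ K : Set ℝ, K ⊆ Icc 0 1 → IsCompact K → K.Nonempty → DFAbsorbing p K →
      (0 : ℝ) ∈ K :=
    fun K hsub hc hne hK => hK.zero_mem hc.isClosed hsub hne hp1
  refine ⟨hzero, hmem, fun K hsub hc hne hK hmin => ?_⟩
  exact (hmin {0} (singleton_subset_iff.2 (hmem K hsub hc hne hK)) isCompact_singleton
    (singleton_nonempty 0) hzero).symm

/-- if `p` is continuous with values in `[0,1]`, `q(0) = 0` and `p(1) > 0`,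
then `{0}` is a `Q`-absorbing compact set, every nonempty `Q`-absorbing compact subset of
`[0,1]` contains `0`, and consequently `{0}` is the unique minimal nonempty `Q`-absorbing
compact set. -/
theorem stmt17 (p : ℝ → ℝ) (hpcont : ContinuousOn p (Set.Icc (0 : ℝ) 1))
    (hp01 : ∀ x ∈ Set.Icc (0 : ℝ) 1, p x ∈ Set.Icc (0 : ℝ) 1)
    (hq0 : 1 - p 0 = 0) (hp1 : 0 < p 1) :
    DFAbsorbing p {(0 : ℝ)} ∧
    (∀ K : Set ℝ, K ⊆ Set.Icc (0 : ℝ) 1 → IsCompact K → K.Nonempty →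
      DFAbsorbing p K → (0 : ℝ) ∈ K) ∧
    ∀ K : Set ℝ, K ⊆ Set.Icc (0 : ℝ) 1 → IsCompact K → K.Nonempty → DFAbsorbing p K →
      (∀ K' : Set ℝ, K' ⊆ K → IsCompact K' → K'.Nonempty → DFAbsorbing p K' → K' = K) →
      K = {(0 : ℝ)} :=
  stmt17_general p hq0 hp1
end

section
/- Let p(x) = 1−x for all x ∈ [0,1], so q(x) = x, and let Δ(x) = min(x, 1−x) for x ∈ [0,1]. Then QΔ(x) = (3x − 4x²)/(4(1−x)) for x ∈ (0, 1/2], and QΔ(x) ≤ (3/4) Δ(x) for every x ∈ [0,1]; consequently Q^n Δ(x) ≤ (3/4)^n Δ(x) for every n ≥ 1 and x ∈ [0,1]. -/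
open MeasureTheory Filter Set

/-!
Since `∫₀¹ φ(tx + 1 − t) dt = ∫₀¹ φ(1 − t(1 − x)) dt` and `Δ(1 − y) = Δ(y)`, for `p(x) = 1 − x`
one gets `QΔ(x) = (1 − x) I(x) + x I(1 − x)` with `I(a) = ∫₀¹ Δ(ta) dt`, which is explicit:
`I(a) = a/2` for `a ≤ 1/2` and `I(a) = 1 − a/2 − 1/(4a)` for `a ≥ 1/2`. This gives the formula
on `(0, 1/2]`, hence `QΔ ≤ (3/4)Δ` there, and on `[1/2, 1]` by the symmetry `QΔ(1 − x) = QΔ(x)`.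
The iterated bound follows because `Q` is linear, positive and preserves continuity.
-/

section General

variable {p : ℝ → ℝ}

lemma DFQ_const_mul (c : ℝ) (φ : ℝ → ℝ) (x : ℝ) :
    DFQ p (fun y => c * φ y) x = c * DFQ p φ x := by
  simp only [DFQ, intervalIntegral.integral_const_mul]
  ring

lemma continuous_DFQ (hp : Continuous p) {φ : ℝ → ℝ} (hφ : Continuous φ) :
    Continuous (DFQ p φ) := by
  unfold DFQ
  fun_prop

lemma mul_add_one_sub_mem_Icc {t x : ℝ} (ht : t ∈ Icc (0 : ℝ) 1) (hx : x ∈ Icc (0 : ℝ) 1) :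
    t * x ∈ Icc (0 : ℝ) 1 ∧ t * x + 1 - t ∈ Icc (0 : ℝ) 1 := by
  obtain ⟨ht0, ht1⟩ := ht
  obtain ⟨hx0, hx1⟩ := hx
  exact ⟨⟨by positivity, by nlinarith⟩, ⟨by nlinarith, by nlinarith⟩⟩

lemma DFQ_mono_on (hp : ∀ x ∈ Icc (0 : ℝ) 1, p x ∈ Icc (0 : ℝ) 1) {φ ψ : ℝ → ℝ}
    (hφ : Continuous φ) (hψ : Continuous ψ) (hφψ : ∀ y ∈ Icc (0 : ℝ) 1, φ y ≤ ψ y)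
    {x : ℝ} (hx : x ∈ Icc (0 : ℝ) 1) :
    DFQ p φ x ≤ DFQ p ψ x := by
  have hint : ∀ {f : ℝ → ℝ}, Continuous f → IntervalIntegrable f MeasureTheory.volume 0 1 :=
    fun hf => hf.intervalIntegrable _ _
  have hleft : ∫ t in (0 : ℝ)..1, φ (t * x) ≤ ∫ t in (0 : ℝ)..1, ψ (t * x) :=
    intervalIntegral.integral_mono_on zero_le_one (hint (by fun_prop)) (hint (by fun_prop))
      fun t ht => hφψ _ (mul_add_one_sub_mem_Icc ht hx).1
  have hright : ∫ t in (0 : ℝ)..1, φ (t * x + 1 - t) ≤ ∫ t in (0 : ℝ)..1, ψ (t * x + 1 - t) :=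
    intervalIntegral.integral_mono_on zero_le_one (hint (by fun_prop)) (hint (by fun_prop))
      fun t ht => hφψ _ (mul_add_one_sub_mem_Icc ht hx).2
  obtain ⟨hp0, hp1⟩ := hp x hx
  unfold DFQ
  gcongr

lemma DFQ_iterate_le_pow_mul (hp : Continuous p) (hp01 : ∀ x ∈ Icc (0 : ℝ) 1, p x ∈ Icc (0 : ℝ) 1)
    {φ : ℝ → ℝ} (hφ : Continuous φ) {c : ℝ} (hc : 0 ≤ c)
    (hQ : ∀ x ∈ Icc (0 : ℝ) 1, DFQ p φ x ≤ c * φ x) (n : ℕ) :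
    ∀ x ∈ Icc (0 : ℝ) 1, (DFQ p)^[n] φ x ≤ c ^ n * φ x := by
  induction n with
  | zero => simp
  | succ n ih =>
    intro x hx
    have hcont : Continuous ((DFQ p)^[n] φ) :=
      Function.Iterate.rec Continuous hφ (fun _ => continuous_DFQ hp) n
    rw [Function.iterate_succ_apply']
    calc DFQ p ((DFQ p)^[n] φ) x
        ≤ DFQ p (fun y => c ^ n * φ y) x :=
          DFQ_mono_on hp01 hcont (continuous_const.mul hφ) ih hx
      _ = c ^ n * DFQ p φ x := DFQ_const_mul _ _ _
      _ ≤ c ^ n * (c * φ x) := by gcongr; exact hQ x hx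
      _ = c ^ (n + 1) * φ x := by ring

end General

lemma integral_tent_mul_of_le_half {a : ℝ} (ha0 : 0 ≤ a) (ha : a ≤ 1 / 2) :
    ∫ t in (0 : ℝ)..1, min (t * a) (1 - t * a) = a / 2 := by
  have hlin : EqOn (fun t => min (t * a) (1 - t * a)) (fun t => t * a) (uIcc 0 1) := by
    intro t ht
    rw [uIcc_of_le zero_le_one] at ht
    have : t * a ≤ 1 / 2 := by nlinarith [ht.1, ht.2]
    exact min_eq_left (by linarith)
  rw [intervalIntegral.integral_congr hlin]
  simp
  ring

lemma integral_tent_mul_of_half_le {a : ℝ} (ha : 1 / 2 ≤ a) :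
    ∫ t in (0 : ℝ)..1, min (t * a) (1 - t * a) = 1 - a / 2 - 1 / (4 * a) := by
  -- the kink of `t ↦ Δ(ta)` is at `t = c`
  set c := 1 / (2 * a) with hc
  have ha0 : 0 < a := by linarith
  have hc0 : 0 ≤ c := by positivity
  have hc1 : c ≤ 1 := by rw [hc, div_le_one (by linarith)]; linarith
  have hca : c * a = 1 / 2 := by rw [hc]; field_simp
  have hint : ∀ u v : ℝ,
      IntervalIntegrable (fun t => min (t * a) (1 - t * a)) MeasureTheory.volume u v :=
    fun u v => Continuous.intervalIntegrable (by fun_prop) u v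
  have hrise : EqOn (fun t => min (t * a) (1 - t * a)) (fun t => t * a) (uIcc 0 c) := by
    intro t ht
    rw [uIcc_of_le hc0] at ht
    have : t * a ≤ 1 / 2 := by nlinarith [ht.2, hca]
    exact min_eq_left (by linarith)
  have hfall : EqOn (fun t => min (t * a) (1 - t * a)) (fun t => 1 - t * a) (uIcc c 1) := by
    intro t ht
    rw [uIcc_of_le hc1] at ht
    have : 1 / 2 ≤ t * a := by nlinarith [ht.1, hca]
    exact min_eq_right (by linarith)
  rw [← intervalIntegral.integral_add_adjacent_intervals (hint 0 c) (hint c 1),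
    intervalIntegral.integral_congr hrise, intervalIntegral.integral_congr hfall,
    intervalIntegral.integral_sub intervalIntegrable_const
      (Continuous.intervalIntegrable (by fun_prop) _ _)]
  simp only [intervalIntegral.integral_mul_const, integral_id, intervalIntegral.integral_const,
    smul_eq_mul, mul_one, hc]
  field_simp
  ring

lemma DFQ_one_sub_tent_apply (x : ℝ) :
    DFQ (fun y => 1 - y) (fun y => min y (1 - y)) x
      = (1 - x) * (∫ t in (0 : ℝ)..1, min (t * x) (1 - t * x))
        + x * ∫ t in (0 : ℝ)..1, min (t * (1 - x)) (1 - t * (1 - x)) := by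
  have hsymm : ∀ t : ℝ, min (t * x + 1 - t) (1 - (t * x + 1 - t))
      = min (t * (1 - x)) (1 - t * (1 - x)) := fun t => by
    rw [min_comm]
    ring_nf
  simp only [DFQ, hsymm, sub_sub_cancel]

lemma DFQ_one_sub_tent_one_sub (x : ℝ) :
    DFQ (fun y => 1 - y) (fun y => min y (1 - y)) (1 - x)
      = DFQ (fun y => 1 - y) (fun y => min y (1 - y)) x := by
  rw [DFQ_one_sub_tent_apply, DFQ_one_sub_tent_apply, sub_sub_cancel]
  ring

lemma DFQ_one_sub_tent_of_le_half {x : ℝ} (hx0 : 0 ≤ x) (hx : x ≤ 1 / 2) :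
    DFQ (fun y => 1 - y) (fun y => min y (1 - y)) x = (3 * x - 4 * x ^ 2) / (4 * (1 - x)) := by
  have hx1 : 1 - x ≠ 0 := by linarith
  rw [DFQ_one_sub_tent_apply, integral_tent_mul_of_le_half hx0 hx,
    integral_tent_mul_of_half_le (by linarith)]
  field_simp
  ring

lemma DFQ_one_sub_tent_le {x : ℝ} (hx : x ∈ Icc (0 : ℝ) 1) :
    DFQ (fun y => 1 - y) (fun y => min y (1 - y)) x ≤ (3 / 4) * min x (1 - x) := by
  have hhalf : ∀ z : ℝ, 0 ≤ z → z ≤ 1 / 2 →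
      DFQ (fun y => 1 - y) (fun y => min y (1 - y)) z ≤ (3 / 4) * z := by
    intro z hz0 hz
    rw [DFQ_one_sub_tent_of_le_half hz0 hz, div_le_iff₀ (by linarith)]
    nlinarith
  obtain ⟨hx0, hx1⟩ := hx
  rcases le_total x (1 / 2) with h | h
  · rw [min_eq_left (by linarith)]
    exact hhalf x hx0 h
  · rw [min_eq_right (by linarith), ← DFQ_one_sub_tent_one_sub]
    exact hhalf (1 - x) (by linarith) (by linarith)

/-- with `p(x) = 1 − x` (so `q(x) = x`) and `Δ(x) = min(x, 1−x)`, one has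
`QΔ(x) = (3x − 4x²)/(4(1−x))` on `(0,1/2]`, `QΔ ≤ (3/4)Δ` on `[0,1]`, and consequently
`Q^nΔ(x) ≤ (3/4)^n Δ(x)` for all `n ≥ 1` and `x ∈ [0,1]`. -/
theorem stmt19 :
    (∀ x ∈ Set.Ioc (0 : ℝ) (1 / 2),
      DFQ (fun y => 1 - y) (fun y => min y (1 - y)) x
        = (3 * x - 4 * x ^ 2) / (4 * (1 - x))) ∧
    (∀ x ∈ Set.Icc (0 : ℝ) 1,
      DFQ (fun y => 1 - y) (fun y => min y (1 - y)) x ≤ (3 / 4) * min x (1 - x)) ∧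
    ∀ n : ℕ, 1 ≤ n → ∀ x ∈ Set.Icc (0 : ℝ) 1,
      (DFQ (fun y => 1 - y))^[n] (fun y => min y (1 - y)) x
        ≤ (3 / 4) ^ n * min x (1 - x) := by
  refine ⟨fun x hx => DFQ_one_sub_tent_of_le_half hx.1.le hx.2,
    fun x hx => DFQ_one_sub_tent_le hx, fun n _ => ?_⟩
  exact DFQ_iterate_le_pow_mul (by fun_prop) (fun x hx => ⟨sub_nonneg.2 hx.2, sub_le_self 1 hx.1⟩)
    (by fun_prop) (by norm_num)
    (fun x hx => DFQ_one_sub_tent_le hx) n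
end
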